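/- arXiv:math/9801151 — 3 statements merged into one kernel-verified Lean document; each statement's English description precedes it below -/
import Mathlib

section
/- Let 0 < n < ω and let D_0, …, D_{n−1} be Ramsey ultrafilters on ℕ which are pairwise not RK-equivalent. Then in the game G(D_0,…,D_{n−1}) player I has no winning strategy: for every strategy σ for player I there exists a sequence ⟨k_m : m < ω⟩ of moves of player II consistent with σ such that for every i < n the set {k_j : j ≡ i (mod n)} belongs to D_i. -/
open Set



/-- `D` is a Ramsey ultrafilter on ℕ: it is nonprincipal and for every partition of ℕ
(given as fibers of `f`) into sets none of which belongs to `D`, there is `A ∈ D`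
meeting each piece in at most one point. -/
def IsRamseyUF (D : Ultrafilter ℕ) : Prop :=
  (∀ a : ℕ, ({a} : Set ℕ) ∉ D) ∧
    ∀ f : ℕ → ℕ, (∀ m : ℕ, f ⁻¹' {m} ∉ D) →
      ∃ A ∈ D, ∀ m : ℕ, (A ∩ f ⁻¹' {m}).Subsingleton

/-- The ultrafilters `D i` are pairwise not Rudin–Keisler-equivalent. -/
def PairwiseNotRKEquiv {n : ℕ} (D : Fin n → Ultrafilter ℕ) : Prop :=
  ∀ i j : Fin n, i ≠ j → ∀ f : ℕ → ℕ, Ultrafilter.map f (D i) ≠ D j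

namespace StmtAux

variable {D : Ultrafilter ℕ}

lemma finite_not_mem (h1 : ∀ a : ℕ, ({a} : Set ℕ) ∉ D)
    {A : Set ℕ} (hA : A.Finite) : A ∉ D := by
  refine Set.Finite.induction_on (motive := fun A _ => A ∉ D) A hA (Ultrafilter.empty_notMem (f := D)) ?_
  intro a s _ _ ih h
  rw [Set.insert_eq] at h
  rcases Ultrafilter.union_mem_iff.mp h with h | h
  · exact h1 a h
  · exact ih h

lemma mem_infinite (h1 : ∀ a : ℕ, ({a} : Set ℕ) ∉ D)
    {A : Set ℕ} (hA : A ∈ D) : A.Infinite := by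
  by_contra h
  rw [Set.not_infinite] at h
  exact finite_not_mem h1 h hA

lemma gt_mem (h1 : ∀ a : ℕ, ({a} : Set ℕ) ∉ D) (t : ℕ) : {x : ℕ | t < x} ∈ D := by
  rw [← Ultrafilter.compl_notMem_iff]
  apply finite_not_mem h1
  have : {x : ℕ | t < x}ᶜ = Set.Iic t := by ext x; simp [Set.mem_Iic, not_lt]
  rw [this]
  exact Set.finite_Iic t

lemma diff_finite_mem (h1 : ∀ a : ℕ, ({a} : Set ℕ) ∉ D)
    {A B : Set ℕ} (hA : A ∈ D) (hB : B.Finite) : A \ B ∈ D := by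
  have hBc : Bᶜ ∈ D := Ultrafilter.compl_mem_iff_notMem.mpr (finite_not_mem h1 hB)
  exact Filter.inter_mem hA hBc

lemma ultra_exists_mem_not_mem {U V : Ultrafilter ℕ} (h : U ≠ V) :
    ∃ S : Set ℕ, S ∈ U ∧ S ∉ V := by
  by_contra hc
  push_neg at hc
  have : (V : Filter ℕ) ≤ (U : Filter ℕ) := fun s hs => hc s hs
  exact h (Ultrafilter.coe_le_coe.mp this).symm

/-- next element of A strictly above t -/
noncomputable def nxt (A : Set ℕ) (t : ℕ) : ℕ := sInf {x | x ∈ A ∧ t < x}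

lemma nxt_spec {A : Set ℕ} (hA : A.Infinite) (t : ℕ) :
    nxt A t ∈ A ∧ t < nxt A t := by
  have hne : {x | x ∈ A ∧ t < x}.Nonempty := by
    obtain ⟨b, hb, hbt⟩ := hA.exists_gt t
    exact ⟨b, hb, hbt⟩
  exact Nat.sInf_mem hne

lemma nxt_mono {A : Set ℕ} (hA : A.Infinite) {t t' : ℕ} (h : t ≤ t') :
    nxt A t ≤ nxt A t' := by
  apply Nat.sInf_le
  obtain ⟨hm, hgt⟩ := nxt_spec hA t'
  exact ⟨hm, lt_of_le_of_lt h hgt⟩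

/-- selector from the Ramsey property -/
lemma ramsey_selector (hD : IsRamseyUF D) (g : ℕ → ℕ)
    (hg : ∀ m : ℕ, g ⁻¹' {m} ∉ D) :
    ∃ A ∈ D, Set.InjOn g A := by
  obtain ⟨A, hA, hsub⟩ := hD.2 g hg
  refine ⟨A, hA, fun x hx y hy hxy => ?_⟩
  exact hsub (g x) ⟨hx, rfl⟩ ⟨hy, by simp [hxy]⟩

/-- The master diagonalization lemma for Ramsey ultrafilters. -/
lemma diag (hD : IsRamseyUF D) (S : ℕ → Set ℕ)
    (hS : ∀ t, S t ∈ D) :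
    ∃ K, K ∈ D ∧ ∀ w v, w ∈ K → v ∈ K → w < v → v ∈ S w := by
  classical
  set C : ℕ → Set ℕ := fun t => S t ∩ {x | t < x} with hCdef
  have hC : ∀ t, C t ∈ D := fun t => Filter.inter_mem (hS t) (gt_mem hD.1 t)
  have hCex : ∀ x : ℕ, {m | x ∉ C m}.Nonempty := by
    intro x
    exact ⟨x, fun hx => lt_irrefl x hx.2⟩
  set g : ℕ → ℕ := fun x => sInf {m | x ∉ C m} with hgdef
  have hg_not : ∀ x, x ∉ C (g x) := fun x => Nat.sInf_mem (hCex x)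
  have hg_lt : ∀ x j, j < g x → x ∈ C j := by
    intro x j hj
    by_contra h
    exact absurd (Nat.sInf_le h) (not_le.mpr hj)
  have hgfib : ∀ m : ℕ, g ⁻¹' {m} ∉ D := by
    intro m hm
    have : (g ⁻¹' {m} ∩ C m) ∈ D := Filter.inter_mem hm (hC m)
    obtain ⟨x, hx1, hx2⟩ := Filter.nonempty_of_mem this
    have : g x = m := hx1
    exact hg_not x (this ▸ hx2)
  obtain ⟨A₁, hA₁, hinj₁⟩ := ramsey_selector hD g hgfib
  have hfin : ∀ T : ℕ, {x | x ∈ A₁ ∧ g x ≤ T}.Finite := by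
    intro T
    apply Set.Finite.of_finite_image (f := g)
    · exact (Set.finite_Iic T).subset (by rintro y ⟨x, ⟨_, hx2⟩, rfl⟩; exact hx2)
    · exact fun x hx y hy => hinj₁ hx.1 hy.1
  have hbd : ∀ T : ℕ, ∃ B, ∀ x, x ∈ A₁ → g x ≤ T → x < B := by
    intro T
    obtain ⟨b, hb⟩ := (hfin T).bddAbove
    exact ⟨b + 1, fun x hx1 hx2 => Nat.lt_succ_of_le (hb ⟨hx1, hx2⟩)⟩
  choose Bd hBd using hbd
  set φ : ℕ → ℕ := fun k => Nat.rec 0 (fun _ ih => max (ih + 1) (Bd ih)) k with hφdef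
  have hφsucc : ∀ k, φ (k + 1) = max (φ k + 1) (Bd (φ k)) := fun k => rfl
  have hφmono : StrictMono φ := by
    apply strictMono_nat_of_lt_succ
    intro k
    rw [hφsucc]
    exact lt_of_lt_of_le (Nat.lt_succ_self _) (le_max_left _ _)
  have hφle : ∀ k, k ≤ φ k := fun k => hφmono.le_apply
  have hφkey : ∀ k x, x ∈ A₁ → g x ≤ φ k → x < φ (k + 1) := by
    intro k x hx hgx
    exact lt_of_lt_of_le (hBd (φ k) x hx hgx) (by rw [hφsucc]; exact le_max_right _ _)
  have hhex : ∀ x : ℕ, {k | x < φ (k + 1)}.Nonempty :=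
    fun x => ⟨x, lt_of_lt_of_le (Nat.lt_succ_self x) (hφle (x + 1))⟩
  set hIdx : ℕ → ℕ := fun x => sInf {k | x < φ (k + 1)} with hhdef
  have hh1 : ∀ x, x < φ (hIdx x + 1) := fun x => Nat.sInf_mem (hhex x)
  have hh2 : ∀ x, 0 < hIdx x → φ (hIdx x) ≤ x := by
    intro x hx
    by_contra h
    push_neg at h
    have h' : hIdx x - 1 ∈ {k | x < φ (k + 1)} := by
      have : hIdx x - 1 + 1 = hIdx x := Nat.succ_pred_eq_of_pos hx
      simp only [mem_setOf_eq, this]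
      exact h
    have h2 : hIdx x ≤ hIdx x - 1 := Nat.sInf_le h'
    omega
  have hhmono : Monotone hIdx := by
    intro x y hxy
    exact Nat.sInf_le (lt_of_le_of_lt hxy (hh1 y))
  have hhfib : ∀ m : ℕ, hIdx ⁻¹' {m} ∉ D := by
    intro m
    apply finite_not_mem hD.1
    apply (Set.finite_Iio (φ (m + 1))).subset
    rintro x (hx : hIdx x = m)
    exact hx ▸ hh1 x
  obtain ⟨A₂, hA₂, hinj₂⟩ := ramsey_selector hD hIdx hhfib
  obtain ⟨E, hE, hEpar⟩ : ∃ E, E ∈ D ∧ ∀ x ∈ E, ∀ y ∈ E, hIdx x % 2 = hIdx y % 2 := by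
    rcases D.mem_or_compl_mem {x | hIdx x % 2 = 0} with h | h
    · exact ⟨_, h, fun x hx y hy => by simp only [mem_setOf_eq] at hx hy; omega⟩
    · refine ⟨_, h, fun x hx y hy => ?_⟩
      simp only [mem_compl_iff, mem_setOf_eq] at hx hy
      omega
  refine ⟨A₁ ∩ A₂ ∩ E, Filter.inter_mem (Filter.inter_mem hA₁ hA₂) hE, ?_⟩
  rintro w v ⟨⟨hw1, hw2⟩, hw3⟩ ⟨⟨hv1, hv2⟩, hv3⟩ hwv
  have hne : hIdx w ≠ hIdx v := by
    intro h
    exact absurd (hinj₂ hw2 hv2 h) (ne_of_lt hwv)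
  have hlt : hIdx w < hIdx v := lt_of_le_of_ne (hhmono hwv.le) hne
  have hpar := hEpar w hw3 v hv3
  have h2 : hIdx w + 2 ≤ hIdx v := by omega
  have hvphi : φ (hIdx w + 2) ≤ v := by
    have h0 : 0 < hIdx v := by omega
    exact le_trans (hφmono.monotone h2) (hh2 v h0)
  have hgv : φ (hIdx w + 1) < g v := by
    by_contra h
    push_neg at h
    have h2' := hφkey (hIdx w + 1) v hv1 h
    have : hIdx w + 1 + 1 = hIdx w + 2 := rfl
    rw [this] at h2'
    omega
  have hwlt : w < g v := lt_trans (hh1 w) hgv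
  exact (hg_lt v w hwlt).1

def Lsets (t : ℕ) : Set (List ℕ) := {s | s.length ≤ t + 1 ∧ ∀ x ∈ s, x ≤ t}

lemma Lsets_finite (t : ℕ) : (Lsets t).Finite := by
  classical
  have h1 : {l : List (Fin (t + 1)) | l.length ≤ t + 1}.Finite :=
    List.finite_length_le (Fin (t + 1)) (t + 1)
  apply (h1.image (List.map Fin.val)).subset
  rintro s ⟨hs1, hs2⟩
  refine ⟨s.attach.map (fun x => (⟨x.1, Nat.lt_succ_of_le (hs2 x.1 x.2)⟩ : Fin (t + 1))), by
    simpa using hs1, ?_⟩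
  rw [List.map_map]
  simp

lemma Lsets_mono {t t' : ℕ} (h : t ≤ t') : Lsets t ⊆ Lsets t' := by
  rintro s ⟨h1, h2⟩
  exact ⟨le_trans h1 (by omega), fun x hx => le_trans (h2 x hx) h⟩

lemma nil_mem_Lsets (t : ℕ) : [] ∈ Lsets t := ⟨by simp, by simp⟩

end StmtAux

open StmtAux

/-- Corollary 1.3: in the game `G(D 0, …, D (n-1))` player I has no winning strategy.
A strategy for player I is a map `σ` assigning to each finite sequence of previous moves
of player II a tuple of sets `σ s i ∈ D i`; player II's play `k` is consistent with `σ`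
if `k m` lies in the `(m mod n)`-th coordinate of `σ` applied to `⟨k 0, …, k (m-1)⟩`.
The conclusion says player II beats `σ`: `{k j : j ≡ i (mod n)} ∈ D i` for all `i`. -/
theorem stmt1 (n : ℕ) (hn : 0 < n) (D : Fin n → Ultrafilter ℕ)
    (hRam : ∀ i : Fin n, IsRamseyUF (D i)) (hRK : PairwiseNotRKEquiv D)
    (σ : List ℕ → (Fin n → Set ℕ)) (hσ : ∀ s : List ℕ, ∀ i : Fin n, σ s i ∈ D i) :
    ∃ k : ℕ → ℕ,
      (∀ m : ℕ,
        k m ∈ σ (List.ofFn fun j : Fin m => k (j : ℕ)) ⟨m % n, Nat.mod_lt _ hn⟩) ∧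
      (∀ i : Fin n, k '' {j : ℕ | j % n = (i : ℕ)} ∈ D i) := by
  classical
  set i0 : Fin n := ⟨0, hn⟩ with hi0def
  have h1 : ∀ i : Fin n, ∀ a : ℕ, ({a} : Set ℕ) ∉ D i := fun i => (hRam i).1
  have hinf : ∀ (i : Fin n) (X : Set ℕ), X ∈ D i → X.Infinite :=
    fun i X hX => mem_infinite (h1 i) hX
  have hne : ∀ i j : Fin n, i ≠ j → D i ≠ D j := by
    intro i j hij heq
    exact hRK i j hij id (by rw [Ultrafilter.map_id, heq])
  -- pairwise disjoint base sets
  have hsepex : ∀ i j : Fin n, ∃ S : Set ℕ, i ≠ j → (S ∈ D i ∧ S ∉ D j) := by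
    intro i j
    by_cases hij : i = j
    · exact ⟨∅, fun h => absurd hij h⟩
    · obtain ⟨S, hS⟩ := ultra_exists_mem_not_mem (hne i j hij)
      exact ⟨S, fun _ => hS⟩
  choose T hT using hsepex
  set U : Fin n → Fin n → Set ℕ :=
    fun i j => if i = j then Set.univ else T i j ∩ (T j i)ᶜ with hUdef
  have hU : ∀ i j, U i j ∈ D i := by
    intro i j
    by_cases hij : i = j
    · simp only [hUdef, if_pos hij]
      exact Filter.univ_mem
    · have h1' := hT i j hij
      have h2' := hT j i (Ne.symm hij)
      simp only [hUdef, if_neg hij]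
      exact Filter.inter_mem h1'.1
        (Ultrafilter.compl_mem_iff_notMem.mpr h2'.2)
  set A : Fin n → Set ℕ := fun i => ⋂ j, U i j with hAdef
  have hA : ∀ i, A i ∈ D i := fun i => Filter.iInter_mem.mpr (hU i)
  have hAdisj : ∀ i j : Fin n, i ≠ j → ∀ x, x ∈ A i → x ∈ A j → False := by
    intro i j hij x hxi hxj
    have h1' : x ∈ U i j := Set.mem_iInter.mp hxi j
    have h2' : x ∈ U j i := Set.mem_iInter.mp hxj i
    simp only [hUdef, if_neg hij, if_neg (Ne.symm hij)] at h1' h2'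
    exact h2'.2 h1'.1
  -- the strategy-intersection sets
  set BT : Fin n → ℕ → Set ℕ := fun i t => ⋂ s ∈ Lsets t, σ s i with hBTdef
  have hBTmem : ∀ i t, BT i t ∈ D i := by
    intro i t
    exact (Filter.biInter_mem (Lsets_finite t)).mpr (fun s _ => hσ s i)
  have hBTanti : ∀ (i : Fin n) {t t' : ℕ}, t ≤ t' → BT i t' ⊆ BT i t :=
    fun i t t' h => Set.biInter_subset_biInter_left (Lsets_mono h)
  have hBTsub : ∀ (i : Fin n) (t : ℕ) (s : List ℕ), s ∈ Lsets t → BT i t ⊆ σ s i :=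
    fun i t s hs => Set.biInter_subset_of_mem hs
  -- cores
  have hK0ex : ∀ i, ∃ K, K ∈ D i ∧ ∀ w v, w ∈ K → v ∈ K → w < v → v ∈ A i ∩ BT i w :=
    fun i => diag (hRam i) (fun t => A i ∩ BT i t)
      (fun t => Filter.inter_mem (hA i) (hBTmem i t))
  choose K0 hK0mem hK0pair using hK0ex
  set K : Fin n → Set ℕ := fun i => K0 i ∩ (A i ∩ BT i 0) with hKdef
  have hKmem : ∀ i, K i ∈ D i :=
    fun i => Filter.inter_mem (hK0mem i) (Filter.inter_mem (hA i) (hBTmem i 0))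
  have hKinf : ∀ i, (K i).Infinite := fun i => hinf i _ (hKmem i)
  have hKsubA : ∀ i, K i ⊆ A i := fun i x hx => hx.2.1
  have hKσnil : ∀ (i : Fin n), ∀ v ∈ K i, v ∈ σ [] i :=
    fun i v hv => hBTsub i 0 [] (nil_mem_Lsets 0) hv.2.2
  have hKpair : ∀ (i : Fin n) (w v : ℕ), w ∈ K i → v ∈ K i → w < v → v ∈ BT i w :=
    fun i w v hw hv hwv => (hK0pair i w v hw.1 hv.1 hwv).2
  -- patches
  set nx : Fin n → ℕ → ℕ := fun i t => nxt (K i) t with hnxdef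
  have hnx1 : ∀ i t, nx i t ∈ K i ∧ t < nx i t := fun i t => nxt_spec (hKinf i) t
  set pt2 : Fin n → ℕ → ℕ := fun i t => nx i (nx i t) with hpt2def
  have hpatch : ∀ i t, pt2 i t ∈ K i ∧ t < pt2 i t ∧ pt2 i t ∈ BT i t := by
    intro i t
    obtain ⟨hm1, hgt1⟩ := hnx1 i t
    obtain ⟨hm2, hgt2⟩ := hnx1 i (nx i t)
    exact ⟨hm2, lt_trans hgt1 hgt2,
      hBTanti i (le_of_lt hgt1) (hKpair i _ _ hm1 hm2 hgt2)⟩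
  -- the speed function
  set N : ℕ → ℕ := fun t => Finset.univ.sup (fun i : Fin n => nx i t) with hNdef
  have hnxleN : ∀ i t, nx i t ≤ N t := by
    intro i t
    rw [hNdef]
    exact Finset.le_sup (f := fun i : Fin n => nx i t) (Finset.mem_univ i)
  have hNgt : ∀ t, t < N t := fun t => lt_of_lt_of_le (hnx1 i0 t).2 (hnxleN i0 t)
  have hNmono : Monotone N := by
    intro t t' h
    exact Finset.sup_mono_fun (fun i _ => nxt_mono (hKinf i) h)
  set Z : ℕ → ℕ := fun t => N^[4 * n + 4] t with hZdef
  have hNiter_le : ∀ (c t : ℕ), t ≤ N^[c] t := by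
    intro c
    induction c with
    | zero => intro t; simp
    | succ c ih =>
      intro t
      calc t ≤ N^[c] t := ih t
        _ ≤ N^[c + 1] t := by
            rw [Function.iterate_succ_apply']
            exact le_of_lt (hNgt _)
  have hNiter_mono : ∀ c : ℕ, Monotone (N^[c]) := fun c => hNmono.iterate c
  have hNiter_count : ∀ {a b : ℕ} (t : ℕ), a ≤ b → N^[a] t ≤ N^[b] t := by
    intro a b t h
    have : b = (b - a) + a := by omega
    rw [this, Function.iterate_add_apply]
    exact hNiter_le (b - a) (N^[a] t)
  have hZmono : Monotone Z := hNiter_mono _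
  have hZle : ∀ t, t ≤ Z t := fun t => hNiter_le _ t
  -- separated cores within each class
  have hK1ex : ∀ i, ∃ K', K' ∈ D i ∧
      ∀ w v, w ∈ K' → v ∈ K' → w < v → v ∈ K i ∩ {x | Z w < x} :=
    fun i => diag (hRam i) (fun t => K i ∩ {x | Z t < x})
      (fun t => Filter.inter_mem (hKmem i) (gt_mem (h1 i) (Z t)))
  choose K1 hK1mem hK1pair using hK1ex
  set K' : Fin n → Set ℕ := fun i => K1 i ∩ K i with hK'def
  have hK'mem : ∀ i, K' i ∈ D i := fun i => Filter.inter_mem (hK1mem i) (hKmem i)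
  have hK'sub : ∀ i, K' i ⊆ K i := fun i x hx => hx.2
  have hK'pair : ∀ (i : Fin n) (w v : ℕ), w ∈ K' i → v ∈ K' i → w < v → Z w < v :=
    fun i w v hw hv hwv => (hK1pair i w v hw.1 hv.1 hwv).2
  -- the owner maps and cross separators
  set g : Fin n → ℕ → ℕ := fun i u => sSup {x | x ∈ K' i ∧ x < u} with hgdef
  have hgspec : ∀ (i : Fin n) (u x : ℕ), x ∈ K' i → x < u →
      g i u ∈ K' i ∧ g i u < u ∧ x ≤ g i u := by
    intro i u x hx hxu
    have hbdd : BddAbove {x | x ∈ K' i ∧ x < u} := ⟨u, fun y hy => le_of_lt hy.2⟩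
    have hne' : {x | x ∈ K' i ∧ x < u}.Nonempty := ⟨x, hx, hxu⟩
    have hmem := Nat.sSup_mem hne' hbdd
    exact ⟨hmem.1, hmem.2, le_csSup hbdd ⟨hx, hxu⟩⟩
  have hSex : ∀ i j : Fin n, ∃ S : Set ℕ, i ≠ j → (S ∈ D i ∧ (g i) ⁻¹' S ∉ D j) := by
    intro i j
    by_cases hij : i = j
    · exact ⟨∅, fun h => absurd hij h⟩
    · have hne' : D i ≠ Ultrafilter.map (g i) (D j) := by
        intro h
        exact hRK j i (Ne.symm hij) (g i) h.symm
      obtain ⟨S, hS1, hS2⟩ := ultra_exists_mem_not_mem hne'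
      refine ⟨S, fun _ => ⟨hS1, ?_⟩⟩
      intro hpre
      exact hS2 (Ultrafilter.mem_map.mpr hpre)
  choose Sm hSm using hSex
  set Vs : Fin n → Fin n → Set ℕ := fun i j => if i = j then Set.univ else Sm i j with hVsdef
  set Ws : Fin n → Fin n → Set ℕ :=
    fun i j => if j = i then Set.univ else ((g j) ⁻¹' (Sm j i))ᶜ with hWsdef
  have hVs : ∀ i j, Vs i j ∈ D i := by
    intro i j
    by_cases hij : i = j
    · simp only [hVsdef, if_pos hij]
      exact Filter.univ_mem
    · simp only [hVsdef, if_neg hij]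
      exact (hSm i j hij).1
  have hWs : ∀ i j, Ws i j ∈ D i := by
    intro i j
    by_cases hj : j = i
    · simp only [hWsdef, if_pos hj]
      exact Filter.univ_mem
    · simp only [hWsdef, if_neg hj]
      exact Ultrafilter.compl_mem_iff_notMem.mpr (hSm j i hj).2
  set C : Fin n → Set ℕ := fun i => (K' i ∩ ⋂ j, Vs i j) ∩ ⋂ j, Ws i j with hCdef
  have hCmem : ∀ i, C i ∈ D i := fun i =>
    Filter.inter_mem (Filter.inter_mem (hK'mem i) (Filter.iInter_mem.mpr (hVs i)))
      (Filter.iInter_mem.mpr (hWs i))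
  have hCsubK' : ∀ i, C i ⊆ K' i := fun i x hx => hx.1.1
  have hCsubK : ∀ i, C i ⊆ K i := fun i x hx => hK'sub i (hCsubK' i hx)
  have hCsubA : ∀ i, C i ⊆ A i := fun i x hx => hKsubA i (hCsubK i hx)
  -- full separation between cores
  have hsepcore : ∀ (i j : Fin n) (zz u : ℕ), zz ∈ C i → u ∈ C j → zz < u → Z zz < u := by
    intro i j zz u hz hu hzu
    by_cases hij : i = j
    · subst hij
      exact hK'pair i zz u (hCsubK' i hz) (hCsubK' i hu) hzu
    · have hzK' : zz ∈ K' i := hCsubK' i hz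
      obtain ⟨hgK', hglt, hgge⟩ := hgspec i u zz hzK' hzu
      have huW : u ∈ Ws j i := Set.mem_iInter.mp hu.2 i
      have hiW : ¬ i = j := hij
      simp only [hWsdef, if_neg hiW] at huW
      -- huW : u ∉ g i ⁻¹' (Sm i j), i.e. g i u ∉ Sm i j
      have hzV : zz ∈ Vs i j := Set.mem_iInter.mp hz.1.2 j
      simp only [hVsdef, if_neg hij] at hzV
      have hzg : zz ≠ g i u := by
        intro h
        rw [h] at hzV
        exact huW hzV
      have hzg' : zz < g i u := lt_of_le_of_ne hgge hzg
      exact lt_trans (hK'pair i zz (g i u) hzK' hgK' hzg') hglt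
  -- prune so that the least core is of class 0
  set a0 : ℕ := sInf (C i0) with ha0def
  have ha0 : a0 ∈ C i0 := Nat.sInf_mem (hinf i0 _ (hCmem i0)).nonempty
  set C' : Fin n → Set ℕ := fun i => C i ∩ {x | a0 ≤ x} with hC'def
  have hC'mem : ∀ i, C' i ∈ D i := by
    intro i
    have : C' i = C i \ {x | x < a0} := by
      ext x
      simp only [hC'def, Set.mem_inter_iff, Set.mem_setOf_eq, Set.mem_diff, not_lt]
    rw [this]
    exact diff_finite_mem (h1 i) (hCmem i) ((Set.finite_Iio a0).subset (fun x hx => hx))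
  have hC'sub : ∀ i, C' i ⊆ C i := fun i x hx => hx.1
  -- merged core set and its enumeration
  set M : Set ℕ := ⋃ i, C' i with hMdef
  have hMinf : (setOf (· ∈ M)).Infinite := by
    have : M.Infinite := (hinf i0 _ (hC'mem i0)).mono (Set.subset_iUnion C' i0)
    exact this
  set z : ℕ → ℕ := fun k => Nat.nth (· ∈ M) k with hzdef
  have hzmem : ∀ k, z k ∈ M := fun k => Nat.nth_mem_of_infinite hMinf k
  have hzmono : StrictMono z := Nat.nth_strictMono hMinf
  have hclsex : ∀ k, ∃ i, z k ∈ C' i := fun k => Set.mem_iUnion.mp (hzmem k)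
  choose cls hcls using hclsex
  have hclsuniq : ∀ k (i : Fin n), z k ∈ C' i → cls k = i := by
    intro k i hk
    by_contra h
    exact hAdisj (cls k) i h (z k) (hCsubA _ (hC'sub _ (hcls k))) (hCsubA i (hC'sub i hk))
  have ha0M : a0 ∈ M := Set.mem_iUnion.mpr ⟨i0, ha0, le_refl a0⟩
  have hz0 : z 0 = a0 := by
    rw [hzdef]
    simp only
    rw [Nat.nth_zero]
    apply le_antisymm
    · exact Nat.sInf_le ha0M
    · refine le_csInf ⟨a0, ha0M⟩ ?_
      intro x hx
      obtain ⟨i, hxi⟩ := Set.mem_iUnion.mp hx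
      exact hxi.2
  have hcls0 : cls 0 = i0 := by
    apply hclsuniq
    rw [hz0]
    exact ⟨ha0, le_refl a0⟩
  have hzsep : ∀ k, Z (z k) < z (k + 1) := by
    intro k
    exact hsepcore (cls k) (cls (k + 1)) _ _ (hC'sub _ (hcls k)) (hC'sub _ (hcls (k + 1)))
      (hzmono (Nat.lt_succ_self k))
  have hzK : ∀ k, z k ∈ K (cls k) := fun k => hCsubK _ (hC'sub _ (hcls k))
  -- positions
  set pos : ℕ → ℕ := fun k => k * n + (cls k).val with hposdef
  have hposdm : ∀ k, pos k / n = k ∧ pos k % n = (cls k).val := by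
    intro k
    constructor
    · show (k * n + (cls k).val) / n = k
      rw [Nat.add_comm, Nat.add_mul_div_right _ _ hn, Nat.div_eq_of_lt (cls k).isLt]
      omega
    · show (k * n + (cls k).val) % n = (cls k).val
      rw [Nat.add_comm, Nat.add_mul_mod_self_right, Nat.mod_eq_of_lt (cls k).isLt]
  have hposlt : ∀ k, pos k < pos (k + 1) := by
    intro k
    have h1' := (cls k).isLt
    have e : (k + 1) * n = k * n + n := by ring
    have h2' : pos k < (k + 1) * n := by
      show k * n + (cls k).val < (k + 1) * n
      omega
    exact lt_of_lt_of_le h2' (Nat.le_add_right _ _)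
  have hposdiff : ∀ k, pos (k + 1) - pos k ≤ 2 * n := by
    intro k
    have h1' := (cls (k + 1)).isLt
    have e : (k + 1) * n = k * n + n := by ring
    show (k + 1) * n + (cls (k + 1)).val - (k * n + (cls k).val) ≤ 2 * n
    omega
  have hpos0 : pos 0 = 0 := by
    simp only [hposdef, hcls0, hi0def]
    simp
  -- the play
  obtain ⟨w, hw0, hwsucc⟩ : ∃ w : ℕ → ℕ, w 0 = z 0 ∧ ∀ m, w (m + 1) =
      if (cls ((m + 1) / n)).val = (m + 1) % n then z ((m + 1) / n)
      else pt2 ⟨(m + 1) % n, Nat.mod_lt _ hn⟩ (w m) :=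
    ⟨fun m => Nat.rec (z 0) (fun m ih =>
      if (cls ((m + 1) / n)).val = (m + 1) % n then z ((m + 1) / n)
      else pt2 ⟨(m + 1) % n, Nat.mod_lt _ hn⟩ ih) m, rfl, fun m => rfl⟩
  -- absorb positions
  have habs : ∀ k, 0 < pos k → w (pos k) = z k := by
    intro k hk
    obtain ⟨m', hm'⟩ : ∃ m', pos k = m' + 1 := ⟨pos k - 1, by omega⟩
    have e1 : (m' + 1) / n = k := by rw [← hm']; exact (hposdm k).1
    have e2 : (m' + 1) % n = (cls k).val := by rw [← hm']; exact (hposdm k).2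
    rw [hm', hwsucc, if_pos (by rw [e1, e2]), e1]
  have hwpos : ∀ k, w (pos k) = z k := by
    intro k
    rcases Nat.eq_zero_or_pos (pos k) with h | h
    · have hk0 : k = 0 := by
        by_contra hk
        have : pos k ≥ n := by
          simp only [hposdef]
          have : k ≥ 1 := by omega
          nlinarith
        omega
      rw [hk0, hpos0, hw0]
    · exact habs k h
  have habschar : ∀ m, (cls (m / n)).val = m % n → m = pos (m / n) := by
    intro m hcond
    conv_lhs => rw [← Nat.div_add_mod' m n]
    simp only [hposdef]
    rw [hcond]
  have hposmonos : StrictMono pos := strictMono_nat_of_lt_succ hposlt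
  have hmid : ∀ k m, pos k < m → m < pos (k + 1) →
      ¬ (cls (m / n)).val = m % n := by
    intro k m h1' h2' hcond
    have hmpos : m = pos (m / n) := habschar m hcond
    have hq1 : k < m / n := by
      by_contra h
      push_neg at h
      have := hposmonos.monotone h
      omega
    have hq2 : m / n < k + 1 := by
      by_contra h
      push_neg at h
      have := hposmonos.monotone h
      omega
    omega
  have hqeq : ∀ m k, pos k ≤ m → m < pos (k + 1) → m + 1 = pos ((m + 1) / n) →
      (m + 1) / n = k + 1 ∧ m + 1 = pos (k + 1) := by
    intro m k h1' h2' heq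
    have hql : k < (m + 1) / n := by
      by_contra h
      push_neg at h
      have := hposmonos.monotone h
      omega
    have hqr : (m + 1) / n < k + 2 := by
      by_contra h
      push_neg at h
      have ha' := hposmonos.monotone h
      have hb' := hposlt (k + 1)
      rw [show k + 1 + 1 = k + 2 from rfl] at hb'
      omega
    have hq : (m + 1) / n = k + 1 := by omega
    exact ⟨hq, by rw [heq, hq]⟩
  have hwpatch : ∀ m, ¬ ((cls ((m + 1) / n)).val = (m + 1) % n) →
      w (m + 1) = pt2 ⟨(m + 1) % n, Nat.mod_lt _ hn⟩ (w m) := by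
    intro m h
    rw [hwsucc, if_neg h]
  have hpt2le : ∀ (i : Fin n) (t : ℕ), pt2 i t ≤ N (N t) := by
    intro i t
    have a1 := hnxleN i t
    have a2 := hnxleN i (nx i t)
    calc pt2 i t = nx i (nx i t) := rfl
      _ ≤ N (nx i t) := a2
      _ ≤ N (N t) := hNmono a1
  have hiter2 : ∀ (c : ℕ) (t : ℕ), N (N (N^[c] t)) = N^[c + 2] t := by
    intro c t
    rw [show c + 2 = 2 + c by omega, Function.iterate_add_apply]
    rfl
  have hblockbound : ∀ k, ∀ j, pos k ≤ j → (j < pos (k + 1) →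
      w j ≤ N^[2 * (j - pos k)] (z k)) := by
    intro k
    refine Nat.le_induction ?_ ?_
    · intro _
      simpa [Nat.sub_self] using (hwpos k).le
    · intro j hj ih hj1
      have hj0 : j < pos (k + 1) := by omega
      have hw_j := ih hj0
      have hnotabs : ¬ ((cls ((j + 1) / n)).val = (j + 1) % n) :=
        hmid k (j + 1) (by omega) hj1
      rw [hwpatch j hnotabs]
      have h2' : (2 : ℕ) * (j + 1 - pos k) = 2 * (j - pos k) + 2 := by omega
      calc pt2 _ (w j) ≤ N (N (w j)) := hpt2le _ _
        _ ≤ N (N (N^[2 * (j - pos k)] (z k))) := hNmono (hNmono hw_j)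
        _ = N^[2 * (j - pos k) + 2] (z k) := hiter2 _ _
        _ = N^[2 * (j + 1 - pos k)] (z k) := by rw [h2']
  have hcover : ∀ m, ∃ k, pos k ≤ m ∧ m < pos (k + 1) := by
    intro m
    induction m with
    | zero =>
      refine ⟨0, le_of_eq hpos0, ?_⟩
      have := hposlt 0
      omega
    | succ m ih =>
      obtain ⟨k, h1', h2'⟩ := ih
      rcases Nat.lt_or_ge (m + 1) (pos (k + 1)) with h | h
      · exact ⟨k, by omega, h⟩
      · have : m + 1 = pos (k + 1) := by omega
        exact ⟨k + 1, by omega, this ▸ (this ▸ hposlt (k + 1))⟩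
  -- key bound at the end of each block
  have hendbound : ∀ m k, pos k ≤ m → m < pos (k + 1) → w m ≤ Z (z k) ∧ N (w m) ≤ Z (z k) := by
    intro m k h1' h2'
    have hb := hblockbound k m h1' h2'
    have hc : 2 * (m - pos k) + 1 ≤ 4 * n + 4 := by
      have := hposdiff k
      omega
    constructor
    · calc w m ≤ N^[2 * (m - pos k)] (z k) := hb
        _ ≤ N^[4 * n + 4] (z k) := hNiter_count _ (by omega)
        _ = Z (z k) := rfl
    · calc N (w m) ≤ N (N^[2 * (m - pos k)] (z k)) := hNmono hb
        _ = N^[2 * (m - pos k) + 1] (z k) := by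
            rw [show 2 * (m - pos k) + 1 = 1 + 2 * (m - pos k) by omega,
              Function.iterate_add_apply]
            rfl
        _ ≤ N^[4 * n + 4] (z k) := hNiter_count _ hc
        _ = Z (z k) := rfl
  have hwlt : ∀ m, w m < w (m + 1) := by
    intro m
    obtain ⟨k, hk1, hk2⟩ := hcover m
    by_cases habs' : (cls ((m + 1) / n)).val = (m + 1) % n
    · have heq := habschar (m + 1) habs'
      obtain ⟨hq, hmeq⟩ := hqeq m k hk1 hk2 heq
      have hwm1 : w (m + 1) = z (k + 1) := by rw [hmeq, hwpos]
      rw [hwm1]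
      calc w m ≤ Z (z k) := (hendbound m k hk1 hk2).1
        _ < z (k + 1) := hzsep k
    · rw [hwpatch m habs']
      exact (hpatch _ _).2.1
  have hwmono : StrictMono w := strictMono_nat_of_lt_succ hwlt
  have hlink : ∀ m, w (m + 1) ∈ BT ⟨(m + 1) % n, Nat.mod_lt _ hn⟩ (w m) := by
    intro m
    by_cases habs' : (cls ((m + 1) / n)).val = (m + 1) % n
    · obtain ⟨k, hk1, hk2⟩ := hcover m
      have heq := habschar (m + 1) habs'
      obtain ⟨hq, hmeq⟩ := hqeq m k hk1 hk2 heq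
      have hwm1 : w (m + 1) = z (k + 1) := by rw [hmeq, hwpos]
      have hidx : (⟨(m + 1) % n, Nat.mod_lt _ hn⟩ : Fin n) = cls (k + 1) := by
        apply Fin.ext
        have : (m + 1) % n = (cls (k + 1)).val := by
          rw [hmeq, (hposdm (k + 1)).2]
        simp [this]
      rw [hidx, hwm1]
      -- spacer
      obtain ⟨hsK, hslt⟩ := hnx1 (cls (k + 1)) (w m)
      have hsbound : nx (cls (k + 1)) (w m) < z (k + 1) := by
        calc nx (cls (k + 1)) (w m) ≤ N (w m) := hnxleN _ _
          _ ≤ Z (z k) := (hendbound m k hk1 hk2).2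
          _ < z (k + 1) := hzsep k
      have hzk1K : z (k + 1) ∈ K (cls (k + 1)) := hzK (k + 1)
      have hBT1 : z (k + 1) ∈ BT (cls (k + 1)) (nx (cls (k + 1)) (w m)) :=
        hKpair _ _ _ hsK hzk1K hsbound
      exact hBTanti _ (le_of_lt hslt) hBT1
    · rw [hwpatch m habs']
      exact (hpatch _ _).2.2
  refine ⟨w, ?_, ?_⟩
  · intro m
    match m with
    | 0 =>
      have hempty : (List.ofFn fun j : Fin 0 => w (j : ℕ)) = [] := by simp
      rw [hempty]
      have hidx0 : (⟨0 % n, Nat.mod_lt _ hn⟩ : Fin n) = i0 := by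
        apply Fin.ext
        simp [hi0def]
      rw [hidx0, hw0]
      have : z 0 ∈ K i0 := by
        have := hzK 0
        rwa [hcls0] at this
      exact hKσnil i0 (z 0) this
    | Nat.succ m =>
      have hist_mem : (List.ofFn fun j : Fin (m + 1) => w (j : ℕ)) ∈ Lsets (w m) := by
        constructor
        · simp only [List.length_ofFn]
          have : m ≤ w m := hwmono.le_apply
          omega
        · intro x hx
          rw [List.mem_ofFn] at hx
          obtain ⟨j, rfl⟩ := hx
          exact hwmono.monotone (by omega : (j : ℕ) ≤ m)
      exact hBTsub _ (w m) _ hist_mem (hlink m)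
  · intro i
    have hsub : C' i ⊆ w '' {j : ℕ | j % n = (i : ℕ)} := by
      intro u hu
      have huM : u ∈ M := Set.mem_iUnion.mpr ⟨i, hu⟩
      haveI := Classical.decPred (· ∈ M)
      have hk : z (Nat.count (· ∈ M) u) = u := Nat.nth_count huM
      have hclsk : cls (Nat.count (· ∈ M) u) = i := by
        apply hclsuniq
        rw [hk]
        exact hu
      refine ⟨pos (Nat.count (· ∈ M) u), ?_, ?_⟩
      · show pos (Nat.count (· ∈ M) u) % n = (i : ℕ)
        rw [(hposdm _).2, hclsk]
      · rw [hwpos _, hk]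
    exact Filter.mem_of_superset (hC'mem i) hsub
end

section
/- Let 0 < n < ω, let D_0, …, D_{n−1} be Ramsey ultrafilters on ℕ which are pairwise not RK-equivalent, and let I ⊆ Q(D_0,…,D_{n−1}) be open dense. Let R be the least set of finite subsets of ℕ satisfying: (i) w ∈ R whenever (w, A) ∈ I for some infinite A; (ii) w ∈ R whenever there exists A ∈ D_{|w| mod n} such that w ∪ {k} ∈ R for every k ∈ A. Then R contains every finite subset of ℕ (equivalently, the rank function rk_I never takes the value ∞). -/
/-- The position of `x` in the increasing enumeration of `A` (for `x ∈ A`):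
the number of elements of `A` below `x`. -/
noncomputable def setIdx (A : Set ℕ) (x : ℕ) : ℕ := Set.ncard {y ∈ A | y < x}

/-- The `i`-th sliceMod `A_i` of `A`: if `⟨k_j⟩` is the increasing enumeration of `A`,
then `sliceMod n A i = {k_j : j ≡ i (mod n)}`. -/
def sliceMod (n : ℕ) (A : Set ℕ) (i : ℕ) : Set ℕ := {x ∈ A | setIdx A x % n = i}

/-- A condition of the forcing `Q = Qⁿ`: a pair `(w, A)` with `w ⊆ ℕ` finite and
`A ⊆ ℕ` infinite. -/
structure QCond (n : ℕ) where
  w : Finset ℕ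
  A : Set ℕ
  infinite : A.Infinite

/-- The order of `Q`: `(w, A) ≤ (v, B)` iff `w ∩ (max v + 1) = v` (i.e. `v ⊆ w` and
every element of `w \ v` exceeds every element of `v`), `w_i \ v_i ⊆ B_i` and
`A_i ⊆ B_i` for every `i < n`. -/
def QLE (n : ℕ) (p q : QCond n) : Prop :=
  q.w ⊆ p.w ∧
  (∀ x ∈ p.w, x ∉ q.w → ∀ y ∈ q.w, y < x) ∧
  (∀ i < n, sliceMod n (↑p.w) i \ sliceMod n (↑q.w) i ⊆ sliceMod n q.A i) ∧
  (∀ i < n, sliceMod n p.A i ⊆ sliceMod n q.A i)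

/-- `p` is a pure extension of `q` : `p ≤ q` and `wᵖ = w^q`. -/
def QPure (n : ℕ) (p q : QCond n) : Prop := QLE n p q ∧ p.w = q.w

/-- Membership in the suborder `Q(D 0, …, D (n-1))`: `A_i ∈ D i` for every `i < n`. -/
def InQD {n : ℕ} (D : Fin n → Ultrafilter ℕ) (p : QCond n) : Prop :=
  ∀ i : Fin n, sliceMod n p.A (i : ℕ) ∈ D i

/-- `p` and `q` are compatible in `Q`. -/
def QCompat (n : ℕ) (p q : QCond n) : Prop := ∃ r : QCond n, QLE n r p ∧ QLE n r q

namespace SV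

lemma finite_not_mem {D : Ultrafilter ℕ} (hD : IsRamseyUF D) :
    ∀ s : Set ℕ, s.Finite → s ∉ D := by
  intro s hs
  have : ∀ (m : ℕ) (s : Set ℕ), s.Finite → s.ncard ≤ m → s ∉ D := by
    intro m
    induction m with
    | zero =>
      intro s hs hc
      have : s = ∅ := by
        have := Set.ncard_eq_zero hs |>.1 (Nat.le_zero.1 hc)
        exact this
      rw [this]; exact D.empty_notMem
    | succ m ih =>
      intro s hs hc hmem
      rcases Set.eq_empty_or_nonempty s with rfl | ⟨a, ha⟩
      · exact D.empty_notMem hmem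
      · have hins : s = {a} ∪ (s \ {a}) := by
          ext x; by_cases hx : x = a <;> simp [hx, ha]
        rw [hins] at hmem
        rcases Ultrafilter.union_mem_iff.1 hmem with h | h
        · exact hD.1 a h
        · refine ih _ hs.diff ?_ h
          have := Set.ncard_diff_singleton_lt_of_mem ha hs
          omega
  exact fun h => this s.ncard s hs le_rfl h

lemma cofinite_mem {D : Ultrafilter ℕ} (hD : IsRamseyUF D) (m : ℕ) :
    {x : ℕ | m < x} ∈ D := by
  have : {x : ℕ | ¬ (m < x)} ∉ D := by
    refine finite_not_mem hD _ ?_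
    have : {x : ℕ | ¬ (m < x)} = {x : ℕ | x ≤ m} := by
      ext x; simp [Nat.not_lt]
    rw [this]; exact Set.finite_le_nat m
  have h2 : {x : ℕ | m < x} = {x : ℕ | ¬ (m < x)}ᶜ := by
    ext x; simp
  rw [h2]
  exact Ultrafilter.compl_mem_iff_notMem.2 this

lemma mem_infinite {D : Ultrafilter ℕ} (hD : IsRamseyUF D) {s : Set ℕ} (hs : s ∈ D) :
    s.Infinite := by
  intro hfin
  exact finite_not_mem hD s hfin hs

lemma exists_injOn {D : Ultrafilter ℕ} (hD : IsRamseyUF D) (f : ℕ → ℕ)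
    (hf : ∀ m : ℕ, f ⁻¹' {m} ∉ D) :
    ∃ A ∈ D, Set.InjOn f A := by
  obtain ⟨A, hA, hsub⟩ := hD.2 f hf
  refine ⟨A, hA, ?_⟩
  intro x hx y hy hxy
  exact hsub (f x) ⟨hx, rfl⟩ ⟨hy, by simp [hxy]⟩

/-- Diagonalization lemma: there are `A ∈ D` and a monotone `Φ` such that any
element of `A` beyond `Φ k` lies in `G k`. -/
lemma diag {D : Ultrafilter ℕ} (hD : IsRamseyUF D) (G : ℕ → Set ℕ)
    (hG : ∀ m, G m ∈ D) :
    ∃ A ∈ D, ∃ Φ : ℕ → ℕ, Monotone Φ ∧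
      ∀ x ∈ A, ∀ k, Φ k < x → (k < x ∧ x ∈ G k) := by
  classical
  set G' : ℕ → Set ℕ := fun m => (⋂ j ∈ Finset.range (m+1), G j) ∩ {x | m < x} with hG'def
  have hG' : ∀ m, G' m ∈ D := by
    intro m
    refine Filter.inter_mem ?_ (cofinite_mem hD m)
    exact (Filter.biInter_finset_mem _).2 fun j _ => hG j
  have hexists : ∀ x : ℕ, ∃ k, x ∉ G' k := by
    intro x
    exact ⟨x, fun h => by exact absurd h.2 (by simp)⟩
  set f : ℕ → ℕ := fun x => Nat.find (hexists x) with hfdef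
  have hf_not : ∀ x, x ∉ G' (f x) := fun x => Nat.find_spec (hexists x)
  have hf_min : ∀ x k, k < f x → x ∈ G' k := by
    intro x k hk
    by_contra h
    exact absurd (Nat.find_min (hexists x) hk) (by simp [h])
  have hfib : ∀ m, f ⁻¹' {m} ∉ D := by
    intro m hm
    have h1 : (G' m) ∩ (f ⁻¹' {m}) ∈ D := Filter.inter_mem (hG' m) hm
    obtain ⟨x, hx1, hx2⟩ := (mem_infinite hD h1).nonempty
    have : f x = m := hx2
    exact hf_not x (by rwa [this])
  obtain ⟨A, hA, hinj⟩ := exists_injOn hD f hfib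
  -- the set of elements of A with small f-value is finite
  have hfin : ∀ z : ℕ, {y ∈ A | f y ≤ z}.Finite := by
    intro z
    have hsub : {y ∈ A | f y ≤ z} ⊆ ⋃ m ∈ Finset.range (z+1), (A ∩ f ⁻¹' {m}) := by
      intro y hy
      simp only [Set.mem_iUnion, Finset.mem_range]
      exact ⟨f y, Nat.lt_succ_of_le hy.2, hy.1, rfl⟩
    refine Set.Finite.subset ?_ hsub
    refine Set.Finite.biUnion (Finset.range (z+1)).finite_toSet ?_
    intro m _
    have hss : (A ∩ f ⁻¹' {m}).Subsingleton := by
      intro a ha b hb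
      exact hinj ha.1 hb.1 (by
        have h1 : f a = m := ha.2
        have h2 : f b = m := hb.2
        rw [h1, h2])
    exact hss.finite
  set Φ : ℕ → ℕ := fun z => ((hfin z).toFinset.sup id) + z + 1 with hΦdef
  have hΦmono : Monotone Φ := by
    intro z z' hz
    have : (hfin z).toFinset ⊆ (hfin z').toFinset := by
      intro y hy
      simp only [Set.Finite.mem_toFinset] at hy ⊢
      exact ⟨hy.1, hy.2.trans hz⟩
    have h2 := Finset.sup_mono (f := id) this
    simp only [hΦdef]
    omega
  refine ⟨A, hA, Φ, hΦmono, ?_⟩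
  intro x hx k hk
  have hfx : k < f x := by
    by_contra h
    push_neg at h
    have hxF : x ∈ {y ∈ A | f y ≤ k} := ⟨hx, h⟩
    have h3 : x ≤ (hfin k).toFinset.sup id := by
      have : x ∈ (hfin k).toFinset := (Set.Finite.mem_toFinset _).2 hxF
      exact Finset.le_sup (f := id) this
    simp only [hΦdef] at hk
    omega
  have hxG' : x ∈ G' k := hf_min x k hfx
  refine ⟨hxG'.2, ?_⟩
  have := hxG'.1
  simp only [Set.mem_iInter, Finset.mem_range] at this
  exact this k (Nat.lt_succ_self k)

end SV

namespace SV2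
open SV

/-- interval system from a monotone growth function -/
noncomputable def ivl (Ψ : ℕ → ℕ) : ℕ → ℕ
  | 0 => 0
  | t+1 => max (Ψ (ivl Ψ t)) (ivl Ψ t) + 1

lemma ivl_strictMono (Ψ : ℕ → ℕ) : StrictMono (ivl Ψ) := by
  apply strictMono_nat_of_lt_succ
  intro t
  simp [ivl]

lemma ivl_ge (Ψ : ℕ → ℕ) (t : ℕ) : t ≤ ivl Ψ t := by
  induction t with
  | zero => simp [ivl]
  | succ t ih =>
    simp only [ivl]
    omega

lemma ivl_gt_psi (Ψ : ℕ → ℕ) (t : ℕ) : Ψ (ivl Ψ t) < ivl Ψ (t+1) := by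
  simp [ivl]

/-- index of x in the interval system -/
noncomputable def idx (Ψ : ℕ → ℕ) (x : ℕ) : ℕ :=
  Nat.findGreatest (fun t => ivl Ψ t ≤ x) x

lemma idx_spec₁ (Ψ : ℕ → ℕ) (x : ℕ) : ivl Ψ (idx Ψ x) ≤ x := by
  classical
  have h0 : ivl Ψ 0 ≤ x := by simp [ivl]
  exact Nat.findGreatest_spec (P := fun t => ivl Ψ t ≤ x) (Nat.zero_le x) h0

lemma idx_spec₂ (Ψ : ℕ → ℕ) (x : ℕ) : x < ivl Ψ (idx Ψ x + 1) := by
  classical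
  by_contra h
  push_neg at h
  by_cases hb : idx Ψ x + 1 ≤ x
  · exact Nat.findGreatest_is_greatest (Nat.lt_succ_self _) hb h
  · have := ivl_ge Ψ (idx Ψ x + 1)
    omega

lemma idx_mono (Ψ : ℕ → ℕ) {x y : ℕ} (h : x ≤ y) : idx Ψ x ≤ idx Ψ y := by
  by_contra hc
  push_neg at hc
  have h1 := idx_spec₂ Ψ y
  have h2 := idx_spec₁ Ψ x
  have h3 : idx Ψ y + 1 ≤ idx Ψ x := hc
  have := (ivl_strictMono Ψ).monotone h3
  omega

/-- Spread lemma: thin out a set in D so that consecutive elements grow by Ψ. -/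
lemma spread {D : Ultrafilter ℕ} (hD : IsRamseyUF D) (Ψ : ℕ → ℕ) (hΨ : Monotone Ψ)
    (X₀ : Set ℕ) (hX₀ : X₀ ∈ D) :
    ∃ X ∈ D, X ⊆ X₀ ∧ ∀ x ∈ X, ∀ y ∈ X, x < y → Ψ x < y := by
  classical
  set g₁ : ℕ → ℕ := fun x => idx Ψ x / 2 with hg₁
  set g₂ : ℕ → ℕ := fun x => (idx Ψ x + 1) / 2 with hg₂
  have hfib : ∀ (g : ℕ → ℕ), (∀ x, idx Ψ x / 2 ≤ g x ∧ g x ≤ (idx Ψ x + 1)/2) →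
      ∀ m, g ⁻¹' {m} ∉ D := by
    intro g hg m hm
    have hbound : g ⁻¹' {m} ⊆ {x | x < ivl Ψ (2*m+2)} := by
      intro x hx
      have hgx : g x = m := hx
      have h1 := (hg x).1
      have h2 := (hg x).2
      have hidx : idx Ψ x ≤ 2*m+1 := by omega
      have := idx_spec₂ Ψ x
      have h4 : ivl Ψ (idx Ψ x + 1) ≤ ivl Ψ (2*m+2) := (ivl_strictMono Ψ).monotone (by omega)
      simp only [Set.mem_setOf_eq]
      omega
    exact finite_not_mem hD _ (Set.Finite.subset (Set.finite_lt_nat _) hbound) hm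
  have hfib₁ : ∀ m, g₁ ⁻¹' {m} ∉ D := hfib g₁ (fun x => by simp only [hg₁]; omega)
  have hfib₂ : ∀ m, g₂ ⁻¹' {m} ∉ D := hfib g₂ (fun x => by simp only [hg₂]; omega)
  obtain ⟨A₁, hA₁, hinj₁⟩ := exists_injOn hD g₁ hfib₁
  obtain ⟨A₂, hA₂, hinj₂⟩ := exists_injOn hD g₂ hfib₂
  refine ⟨X₀ ∩ A₁ ∩ A₂, Filter.inter_mem (Filter.inter_mem hX₀ hA₁) hA₂,
    fun x hx => hx.1.1, ?_⟩
  intro x hx y hy hxy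
  have hxy' : idx Ψ x + 2 ≤ idx Ψ y := by
    by_contra hc
    push_neg at hc
    have h1 : idx Ψ x ≤ idx Ψ y := idx_mono Ψ (le_of_lt hxy)
    have heq : idx Ψ y = idx Ψ x ∨ idx Ψ y = idx Ψ x + 1 := by omega
    have hne : x ≠ y := ne_of_lt hxy
    rcases heq with h | h
    · rcases Nat.even_or_odd (idx Ψ x) with ⟨s, hs⟩ | ⟨s, hs⟩
      · exact hne (hinj₁ hx.1.2 hy.1.2 (by simp only [hg₁, h]))
      · exact hne (hinj₁ hx.1.2 hy.1.2 (by simp only [hg₁, h]))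
    · rcases Nat.even_or_odd (idx Ψ x) with ⟨s, hs⟩ | ⟨s, hs⟩
      · -- idx x = 2s : g₁ x = s, g₁ y = (2s+1)/2 = s
        exact hne (hinj₁ hx.1.2 hy.1.2 (by simp only [hg₁, h, hs]; omega))
      · -- idx x = 2s+1 : g₂ x = s+1, g₂ y = (2s+3)/2 = s+1
        exact hne (hinj₂ hx.2 hy.2 (by simp only [hg₂, h, hs]; omega))
  have h1 : x < ivl Ψ (idx Ψ x + 1) := idx_spec₂ Ψ x
  have h2 : ivl Ψ (idx Ψ y) ≤ y := idx_spec₁ Ψ y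
  have h3 : ivl Ψ (idx Ψ x + 2) ≤ ivl Ψ (idx Ψ y) := (ivl_strictMono Ψ).monotone hxy'
  have h4 : Ψ (ivl Ψ (idx Ψ x + 1)) < ivl Ψ (idx Ψ x + 2) := ivl_gt_psi Ψ _
  have h5 : Ψ x ≤ Ψ (ivl Ψ (idx Ψ x + 1)) := hΨ (le_of_lt h1)
  omega

end SV2

namespace SV3
open SV SV2

/-- Separation lemma: using non-RK-equivalence, an element of `V` can be shrunk so
that its `Ψ`-neighborhood is not in `U`. -/
lemma separate {U V : Ultrafilter ℕ} (hV : IsRamseyUF V)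
    (hmap : ∀ g : ℕ → ℕ, Ultrafilter.map g U ≠ V)
    (Ψ : ℕ → ℕ) (hΨ : Monotone Ψ) (hid : ∀ m, m ≤ Ψ m)
    (X₀ : Set ℕ) (hX₀ : X₀ ∈ V) :
    ∃ X ∈ V, X ⊆ X₀ ∧ {y | ∃ x ∈ X, x ≤ Ψ y ∧ y ≤ Ψ x} ∉ U := by
  classical
  set Ψ3 : ℕ → ℕ := fun m => Ψ (Ψ (Ψ m)) with hΨ3
  have hΨ3mono : Monotone Ψ3 := hΨ.comp (hΨ.comp hΨ)
  obtain ⟨X', hX'V, hX'sub, hX'spread⟩ :=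
    spread hV Ψ3 hΨ3mono (X₀ ∩ {x | 0 < x})
      (Filter.inter_mem hX₀ (cofinite_mem hV 0))
  by_contra hcon
  push_neg at hcon
  set g : ℕ → ℕ := fun y => Nat.findGreatest (fun x => x ∈ X') (Ψ y) with hg
  have hkey : ∀ S : Set ℕ, S ∈ V → g ⁻¹' S ∈ U := by
    intro S hS
    have hX'' : X' ∩ S ∈ V := Filter.inter_mem hX'V hS
    have hN : {y | ∃ x ∈ X' ∩ S, x ≤ Ψ y ∧ y ≤ Ψ x} ∈ U :=
      hcon (X' ∩ S) hX'' (fun x hx => (hX'sub hx.1).1)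
    refine Filter.mem_of_superset hN ?_
    intro y hy
    obtain ⟨x, hxX, hx1, hx2⟩ := hy
    have hxpos : 0 < x := (hX'sub hxX.1).2
    have h1 : x ≤ g y := Nat.le_findGreatest hx1 hxX.1
    have h2 : g y ∈ X' := Nat.findGreatest_spec (P := fun x => x ∈ X') hx1 hxX.1
    have h3 : g y ≤ Ψ y := Nat.findGreatest_le _
    have heq : g y = x := by
      by_contra hne
      have hlt : x < g y := lt_of_le_of_ne h1 (fun h => hne h.symm)
      have := hX'spread x hxX.1 (g y) h2 hlt
      have h4 : Ψ y ≤ Ψ (Ψ x) := hΨ hx2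
      have h5 : Ψ (Ψ x) ≤ Ψ3 x := hid (Ψ (Ψ x))
      omega
    show g y ∈ S
    rw [heq]
    exact hxX.2
  have hVle : (↑(Ultrafilter.map g U) : Filter ℕ) ≤ ↑V := by
    intro S hS
    exact hkey S hS
  have := Ultrafilter.unique V hVle
  exact hmap g (Ultrafilter.coe_inj.1 this)

end SV3

namespace SV4
open SV SV2 SV3

def PairwiseNotRKEquiv' {n : ℕ} (D : Fin n → Ultrafilter ℕ) : Prop :=
  ∀ i j : Fin n, i ≠ j → ∀ f : ℕ → ℕ, Ultrafilter.map f (D i) ≠ D j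

lemma window (n : ℕ) (hn : 0 < n) (r q : ℕ) (hr : r < n) :
    ∃ j, q < j ∧ j ≤ q + n ∧ j % n = r := by
  set t := (q+1) % n with ht
  have htn : t < n := Nat.mod_lt _ hn
  set u := (r + n - t) % n with hu
  have hun : u < n := Nat.mod_lt _ hn
  refine ⟨q + 1 + u, by omega, by omega, ?_⟩
  have h1 : (q + 1 + u) % n = ((q+1) + (r + n - t)) % n := by
    rw [Nat.add_mod_mod]
  rw [h1]
  have h2 : (q+1) + (r + n - t) = (q + 1 - t) + (r + n) := by
    have : t ≤ q + 1 := Nat.mod_le _ _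
    omega
  rw [h2]
  have h3 : (q + 1 - t) % n = 0 := by
    have hdvd : n ∣ (q + 1 - t) := by
      have := Nat.mod_add_div (q+1) n
      have ht' : q + 1 - t = n * ((q+1)/n) := by omega
      exact ⟨(q+1)/n, ht'⟩
    omega
  rw [Nat.add_mod, h3, Nat.zero_add, Nat.mod_mod_of_dvd _ (dvd_refl n),
    Nat.add_mod_right]
  exact Nat.mod_eq_of_lt hr

lemma iter_count_mono {Ψ : ℕ → ℕ} (hid : ∀ m, m ≤ Ψ m) :
    ∀ s t m, s ≤ t → Ψ^[s] m ≤ Ψ^[t] m := by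
  intro s t m hst
  induction t with
  | zero => simp_all
  | succ t ih =>
    rcases Nat.lt_succ_iff_lt_or_eq.1 (Nat.lt_succ_of_le hst) with h | h
    · have h2 : Ψ^[t] m ≤ Ψ^[t+1] m := by
        rw [Function.iterate_succ_apply']
        exact hid _
      exact le_trans (ih (by omega)) h2
    · rw [h]

/-- Build a single set with membership, inclusion, lateness, spread and
non-concentration of its Ψ-neighborhood on the other ultrafilters. -/
lemma buildX {n : ℕ} (D : Fin n → Ultrafilter ℕ)
    (hRam : ∀ i, IsRamseyUF (D i)) (hRK : PairwiseNotRKEquiv' D)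
    (Ψ : ℕ → ℕ) (hΨ : Monotone Ψ) (hid : ∀ m, m ≤ Ψ m)
    (L : ℕ) (A' : Fin n → Set ℕ) (hA' : ∀ i, A' i ∈ D i) (i : Fin n) :
    ∃ X : Set ℕ, X ∈ D i ∧ X ⊆ A' i ∧ (∀ x ∈ X, L < x) ∧
      (∀ x ∈ X, ∀ y ∈ X, x < y → Ψ x < y) ∧
      (∀ j : Fin n, j ≠ i → {y | ∃ x ∈ X, x ≤ Ψ y ∧ y ≤ Ψ x} ∉ D j) := by
  classical
  obtain ⟨X₂, hX₂D, hX₂sub, hX₂spread⟩ :=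
    spread (hRam i) Ψ hΨ (A' i ∩ {x | L < x})
      (Filter.inter_mem (hA' i) (cofinite_mem (hRam i) L))
  -- now shrink to handle all targets
  have main : ∀ T : Finset (Fin n), ∃ X : Set ℕ, X ∈ D i ∧ X ⊆ X₂ ∧
      ∀ j ∈ T, j ≠ i → {y | ∃ x ∈ X, x ≤ Ψ y ∧ y ≤ Ψ x} ∉ D j := by
    intro T
    induction T using Finset.induction_on with
    | empty => exact ⟨X₂, hX₂D, subset_rfl, by simp⟩
    | insert _ _ hnotmem ih =>
      rename_i j T
      obtain ⟨X, hXD, hXsub, hXT⟩ := ih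
      by_cases hji : j = i
      · exact ⟨X, hXD, hXsub, by
          intro j' hj' hne
          rcases Finset.mem_insert.1 hj' with rfl | h
          · exact absurd hji hne
          · exact hXT j' h hne⟩
      · obtain ⟨X', hX'D, hX'sub, hX'N⟩ :=
          separate (U := D j) (V := D i) (hRam i)
            (fun g => hRK j i hji g) Ψ hΨ hid X hXD
        refine ⟨X', hX'D, hX'sub.trans hXsub, ?_⟩
        intro j' hj' hne
        rcases Finset.mem_insert.1 hj' with rfl | h
        · exact hX'N
        · intro hmem
          refine hXT j' h hne (Filter.mem_of_superset hmem ?_)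
          intro z hz
          obtain ⟨x, hx1, hx2⟩ := hz
          exact ⟨x, hX'sub hx1, hx2⟩
  obtain ⟨X, hXD, hXsub, hXN⟩ := main Finset.univ
  refine ⟨X, hXD, fun x hx => (hX₂sub (hXsub hx)).1, fun x hx => (hX₂sub (hXsub hx)).2,
    fun x hx y hy hxy => hX₂spread x (hXsub hx) y (hXsub hy) hxy,
    fun j hj => hXN j (Finset.mem_univ j) hj⟩

end SV4

namespace SV5
open SV SV2 SV3 SV4

lemma core (n : ℕ) (hn : 0 < n) (D : Fin n → Ultrafilter ℕ)
    (hRam : ∀ i, IsRamseyUF (D i)) (hRK : PairwiseNotRKEquiv' D)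
    (G : Fin n → ℕ → Set ℕ) (hG : ∀ c m, G c m ∈ D c)
    (hanti : ∀ c m m', m ≤ m' → G c m' ⊆ G c m)
    (hgt : ∀ c m x, x ∈ G c m → m < x)
    (m₀ : ℕ) :
    ∃ a : ℕ → ℕ, StrictMono a ∧
      (∀ i : Fin n, {x | ∃ j, j % n = (i : ℕ) ∧ a j = x} ∈ D i) ∧
      (∀ j, a j ∈ G ⟨j % n, Nat.mod_lt _ hn⟩ m₀) ∧
      (∀ j m, m < j → a j ∈ G ⟨j % n, Nat.mod_lt _ hn⟩ (a m)) := by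
  classical
  set cls : ℕ → Fin n := fun j => (⟨j % n, Nat.mod_lt _ hn⟩ : Fin n) with hcls
  -- diagonalization data
  have hdiag : ∀ i : Fin n, ∃ A ∈ D i, ∃ Φ : ℕ → ℕ, Monotone Φ ∧
      ∀ x ∈ A, ∀ k, Φ k < x → (k < x ∧ x ∈ G i k) := fun i => diag (hRam i) (G i) (hG i)
  choose A' hA' Φ hΦm hΦd using hdiag
  -- emergency points
  set e : Fin n → ℕ → ℕ := fun c m => Classical.choose (Ultrafilter.nonempty_of_mem (hG c m)) with he
  have heG : ∀ c m, e c m ∈ G c m := fun c m =>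
    Classical.choose_spec (Ultrafilter.nonempty_of_mem (hG c m))
  -- growth functions
  set Ψ₀ : ℕ → ℕ := fun m =>
    (Finset.univ.sup fun i : Fin n => Φ i m) + (Finset.univ.sup fun c : Fin n => e c m) + m + 1
    with hΨ₀
  set Ψ : ℕ → ℕ := fun m => (Finset.range (m+1)).sup Ψ₀ with hΨ
  have hΨ₀le : ∀ m, Ψ₀ m ≤ Ψ m := fun m =>
    Finset.le_sup (f := Ψ₀) (Finset.mem_range.2 (Nat.lt_succ_self m))
  have hΨmono : Monotone Ψ := by
    intro z z' hz
    exact Finset.sup_mono (Finset.range_subset_range.2 (by omega))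
  have hΦΨ : ∀ (i : Fin n) m, Φ i m ≤ Ψ m := by
    intro i m
    have h1 : Φ i m ≤ Finset.univ.sup fun i : Fin n => Φ i m :=
      Finset.le_sup (f := fun i : Fin n => Φ i m) (Finset.mem_univ i)
    have := hΨ₀le m
    simp only [hΨ₀] at this
    omega
  have heΨ : ∀ (c : Fin n) m, e c m ≤ Ψ m := by
    intro c m
    have h1 : e c m ≤ Finset.univ.sup fun c : Fin n => e c m :=
      Finset.le_sup (f := fun c : Fin n => e c m) (Finset.mem_univ c)
    have := hΨ₀le m
    simp only [hΨ₀] at this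
    omega
  have hmΨ : ∀ m, m < Ψ m := by
    intro m
    have := hΨ₀le m
    simp only [hΨ₀] at this
    omega
  have hidΨ : ∀ m, m ≤ Ψ m := fun m => le_of_lt (hmΨ m)
  set Ψs : ℕ → ℕ := Ψ^[n+1] with hΨs
  have hΨsmono : Monotone Ψs := hΨmono.iterate _
  have hΨsid : ∀ m, m ≤ Ψs m := by
    intro m
    have := iter_count_mono hidΨ 0 (n+1) m (Nat.zero_le _)
    simpa [hΨs] using this
  have hΨΨs : ∀ m, Ψ m ≤ Ψs m := by
    intro m
    have := iter_count_mono hidΨ 1 (n+1) m (by omega)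
    simpa [hΨs] using this
  -- the basic large sets
  have hbuild := fun i => buildX D hRam hRK Ψs hΨsmono hΨsid (Ψs m₀) A' hA' i
  choose X hXD hXsubA hXlate hXspread hXN using hbuild
  -- final large sets, mutually separated
  set Z : Fin n → Set ℕ :=
    fun i => X i ∩ ⋂ j ∈ Finset.univ.erase i, {y | ∃ x ∈ X j, x ≤ Ψs y ∧ y ≤ Ψs x}ᶜ
    with hZ
  have hZX : ∀ i, Z i ⊆ X i := fun i x hx => hx.1
  have hZD : ∀ i, Z i ∈ D i := by
    intro i
    refine Filter.inter_mem (hXD i) ((Filter.biInter_finset_mem _).2 ?_)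
    intro j hj
    have hji : j ≠ i := (Finset.mem_erase.1 hj).1
    exact Ultrafilter.compl_mem_iff_notMem.2 (hXN j i (fun h => hji h.symm))
  have hZnotN : ∀ i j, i ≠ j → ∀ y ∈ Z j, ¬ ∃ x ∈ X i, x ≤ Ψs y ∧ y ≤ Ψs x := by
    intro i j hij z hz
    have := hz.2
    simp only [Set.mem_iInter] at this
    exact this i (Finset.mem_erase.2 ⟨fun h => hij (by rw [h]), Finset.mem_univ _⟩)
  have hcross : ∀ i j, i ≠ j → ∀ x ∈ Z i, ∀ z ∈ Z j, x < z → Ψs x < z := by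
    intro i j hij x hx z hz hxz
    by_contra hc
    push_neg at hc
    exact hZnotN i j hij z hz ⟨x, hZX i hx, le_trans (le_of_lt hxz) (hΨsid z), hc⟩
  have hZdisj : ∀ i j, i ≠ j → ∀ x, x ∈ Z i → x ∈ Z j → False := by
    intro i j hij x hxi hxj
    exact hZnotN i j hij x hxj ⟨x, hZX i hxi, hΨsid x, hΨsid x⟩
  -- the merged set and its enumeration
  set Y : Set ℕ := ⋃ i, Z i with hY
  have hYinf : (setOf fun x => x ∈ Y).Infinite := by
    have h1 : Z ⟨0, hn⟩ ⊆ Y := Set.subset_iUnion Z ⟨0, hn⟩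
    have h2 : (Z ⟨0, hn⟩).Infinite := mem_infinite (hRam _) (hZD _)
    exact Set.Infinite.mono h1 h2
  set ynth : ℕ → ℕ := Nat.nth (fun x => x ∈ Y) with hynth
  have hymem : ∀ k, ynth k ∈ Y := fun k => Nat.nth_mem_of_infinite hYinf k
  have hysm : StrictMono ynth := Nat.nth_strictMono hYinf
  have hysurj : ∀ x ∈ Y, ∃ k, ynth k = x := by
    intro x hx
    have := Nat.range_nth_of_infinite hYinf
    have hx' : x ∈ Set.range ynth := by rw [hynth, this]; exact hx
    exact hx'
  set γ : ℕ → Fin n := fun k => Classical.choose (Set.mem_iUnion.1 (hymem k)) with hγdef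
  have hγ : ∀ k, ynth k ∈ Z (γ k) := fun k =>
    Classical.choose_spec (Set.mem_iUnion.1 (hymem k))
  -- key growth facts about the enumeration
  have hylate : ∀ k, Ψs m₀ < ynth k := fun k => hXlate _ _ (hZX _ (hγ k))
  have hynext : ∀ k, Ψs (ynth k) < ynth (k+1) := by
    intro k
    have hlt : ynth k < ynth (k+1) := hysm (Nat.lt_succ_self k)
    by_cases hsame : γ k = γ (k+1)
    · refine hXspread (γ k) _ (hZX _ (hγ k)) _ ?_ hlt
      rw [hsame]; exact hZX _ (hγ (k+1))
    · exact hcross (γ k) (γ (k+1)) hsame _ (hγ k) _ (hγ (k+1)) hlt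
  have hydiag : ∀ k z, Φ (γ k) z < ynth k → (z < ynth k ∧ ynth k ∈ G (γ k) z) :=
    fun k z hz => hΦd (γ k) _ (hXsubA _ (hZX _ (hγ k))) z hz
  -- the recursive construction
  set step : ℕ → ℕ × ℕ → ℕ × ℕ := fun j pr =>
    if γ pr.2 = cls j then (ynth pr.2, pr.2 + 1) else (e (cls j) pr.1, pr.2) with hstepdef
  set S : ℕ → ℕ × ℕ := fun j =>
    Nat.rec (motive := fun _ => ℕ × ℕ) (step 0 (m₀, 0)) (fun j ih => step (j+1) ih) j
    with hSdef
  set a : ℕ → ℕ := fun j => (S j).1 with hadef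
  set κ : ℕ → ℕ := fun j => (S j).2 with hκdef
  have hS0 : S 0 = step 0 (m₀, 0) := rfl
  have hSsucc : ∀ j, S (j+1) = step (j+1) (S j) := fun _ => rfl
  have hcase : ∀ j, (γ (κ j) = cls (j+1) ∧ a (j+1) = ynth (κ j) ∧ κ (j+1) = κ j + 1) ∨
      (γ (κ j) ≠ cls (j+1) ∧ a (j+1) = e (cls (j+1)) (a j) ∧ κ (j+1) = κ j) := by
    intro j
    by_cases h : γ (κ j) = cls (j+1)
    · exact Or.inl ⟨h, by simp [hadef, hκdef, hSsucc j, hstepdef, show γ (S j).2 = cls (j+1) from h]⟩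
    · exact Or.inr ⟨h, by simp [hadef, hκdef, hSsucc j, hstepdef, show ¬ γ (S j).2 = cls (j+1) from h]⟩
  have hcase0 : (γ 0 = cls 0 ∧ a 0 = ynth 0 ∧ κ 0 = 1) ∨
      (γ 0 ≠ cls 0 ∧ a 0 = e (cls 0) m₀ ∧ κ 0 = 0) := by
    by_cases h : γ 0 = cls 0
    · exact Or.inl ⟨h, by simp [hadef, hκdef, hS0, hstepdef, h]⟩
    · exact Or.inr ⟨h, by simp [hadef, hκdef, hS0, hstepdef, h]⟩
  have hInv : ∀ j, (a j ∈ G (cls j) m₀) ∧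
      (∀ m, m < j → a m < a j ∧ a j ∈ G (cls j) (a m)) ∧
      (κ j = 0 → (∀ j', j' ≤ j → γ 0 ≠ cls j') ∧ a j ≤ Ψ^[j+1] m₀) ∧
      (∀ k, κ j = k + 1 → ∃ q, q ≤ j ∧ a q = ynth k ∧ q % n = ((γ k : Fin n) : ℕ) ∧
        (∀ j', q < j' → j' ≤ j → γ (k+1) ≠ cls j') ∧ j - q < n ∧
        a j ≤ Ψ^[j - q] (ynth k)) := by
    intro j
    induction j with
    | zero =>
      rcases hcase0 with ⟨hg, hA, hK⟩ | ⟨hg, hA, hK⟩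
      · refine ⟨?_, by omega, by omega, ?_⟩
        · have hb : Φ (γ 0) m₀ < ynth 0 := by
            have h1 : Φ (γ 0) m₀ ≤ Ψ m₀ := hΦΨ _ _
            have h2 : Ψ m₀ ≤ Ψs m₀ := hΨΨs m₀
            have h3 := hylate 0
            omega
          have := (hydiag 0 m₀ hb).2
          rw [hg] at this
          rw [hA]
          exact this
        · intro k hk
          have hk0 : k = 0 := by omega
          subst hk0
          refine ⟨0, le_rfl, hA, ?_, by omega, by omega, by simp [hA]⟩
          have : (cls 0 : Fin n) = γ 0 := hg.symm
          have h2 := congrArg Fin.val this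
          simpa [hcls] using h2
      · refine ⟨?_, by omega, ?_, by omega⟩
        · rw [hA]; exact heG _ _
        · intro _
          constructor
          · intro j' hj'
            have : j' = 0 := by omega
            subst this
            exact fun h => hg h
          · rw [hA]
            have := heΨ (cls 0) m₀
            simpa using this
    | succ j ih =>
      obtain ⟨ihF2, ihF3, ihP0, ihPk⟩ := ih
      have hajm₀ : m₀ < a j := hgt _ _ _ ihF2
      have amono : ∀ m, m ≤ j → a m ≤ a j := by
        intro m hm
        rcases Nat.lt_or_ge m j with h | h
        · exact le_of_lt (ihF3 m h).1
        · have : m = j := by omega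
          rw [this]
      rcases hcase j with ⟨hg, hA, hK⟩ | ⟨hg, hA, hK⟩
      · -- genuine step
        have hbound : Ψ (a j) < ynth (κ j) := by
          rcases Nat.eq_zero_or_pos (κ j) with hκj | hκj
          · obtain ⟨hres, hb⟩ := ihP0 hκj
            have hjn : j + 1 ≤ n := by
              by_contra hc
              push_neg at hc
              obtain ⟨j'', h1, h2, h3⟩ := window n hn ((γ 0 : Fin n) : ℕ) 0 (γ 0).2
              have hj'' : j'' ≤ j := by omega
              refine hres j'' hj'' ?_
              apply Fin.ext
              simp only [hcls]
              exact h3.symm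
            have h4 : a j ≤ Ψ^[n] m₀ := le_trans hb (iter_count_mono hidΨ (j+1) n m₀ hjn)
            have h5 : Ψ (a j) ≤ Ψ (Ψ^[n] m₀) := hΨmono h4
            have h6 : Ψ (Ψ^[n] m₀) = Ψs m₀ := (Function.iterate_succ_apply' Ψ n m₀).symm
            have h7 := hylate (κ j)
            omega
          · obtain ⟨k, hκj⟩ : ∃ k, κ j = k + 1 := ⟨κ j - 1, by omega⟩
            obtain ⟨q, hq, haq, hqmod, hres, hcnt, hb⟩ := ihPk k hκj
            have h4 : a j ≤ Ψ^[n-1] (ynth k) :=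
              le_trans hb (iter_count_mono hidΨ (j-q) (n-1) (ynth k) (by omega))
            have h5 : Ψ (a j) ≤ Ψ (Ψ^[n-1] (ynth k)) := hΨmono h4
            have h6 : Ψ (Ψ^[n-1] (ynth k)) = Ψ^[n] (ynth k) := by
              conv_rhs => rw [show n = (n-1)+1 by omega]
              rw [Function.iterate_succ_apply']
            have h7 : Ψ^[n] (ynth k) ≤ Ψ^[n+1] (ynth k) :=
              iter_count_mono hidΨ n (n+1) _ (by omega)
            have h8 : Ψs (ynth k) < ynth (k+1) := hynext k
            rw [hΨs] at h8
            rw [hκj]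
            omega
        have hmain : ∀ z, z ≤ a j → z < ynth (κ j) ∧ ynth (κ j) ∈ G (γ (κ j)) z := by
          intro z hz
          refine hydiag (κ j) z ?_
          have h1 : Φ (γ (κ j)) z ≤ Ψ z := hΦΨ _ _
          have h2 : Ψ z ≤ Ψ (a j) := hΨmono hz
          omega
        refine ⟨?_, ?_, ?_, ?_⟩
        · have := (hmain m₀ (le_of_lt hajm₀)).2
          rw [hg] at this
          rw [hA]
          exact this
        · intro m hm
          have hm' : m ≤ j := by omega
          have := hmain (a m) (amono m hm')
          rw [hg] at this
          rw [hA]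
          exact ⟨this.1, this.2⟩
        · intro h
          rw [hK] at h
          omega
        · intro k hk
          rw [hK] at hk
          have hkk : k = κ j := by omega
          subst hkk
          refine ⟨j+1, le_rfl, hA, ?_, by omega, by omega, by simp [hA]⟩
          have h2 := congrArg Fin.val hg
          simp only [hcls] at h2
          exact h2.symm
      · -- correction step
        have haG : a (j+1) ∈ G (cls (j+1)) (a j) := by rw [hA]; exact heG _ _
        have hlt : a j < a (j+1) := hgt _ _ _ haG
        refine ⟨?_, ?_, ?_, ?_⟩
        · exact hanti _ _ _ (le_of_lt hajm₀) haG
        · intro m hm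
          rcases Nat.lt_or_ge m j with h | h
          · exact ⟨lt_trans (ihF3 m h).1 hlt, hanti _ _ _ (amono m (by omega)) haG⟩
          · have : m = j := by omega
            subst this
            exact ⟨hlt, haG⟩
        · intro h
          rw [hK] at h
          obtain ⟨hres, hb⟩ := ihP0 h
          constructor
          · intro j' hj'
            rcases Nat.lt_or_ge j' (j+1) with h' | h'
            · exact hres j' (by omega)
            · have : j' = j + 1 := by omega
              subst this
              rw [h] at hg
              exact hg
          · rw [hA]
            have h1 : e (cls (j+1)) (a j) ≤ Ψ (a j) := heΨ _ _
            have h2 : Ψ (a j) ≤ Ψ (Ψ^[j+1] m₀) := hΨmono hb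
            have h3 : Ψ (Ψ^[j+1] m₀) = Ψ^[j+1+1] m₀ :=
              (Function.iterate_succ_apply' Ψ (j+1) m₀).symm
            omega
        · intro k hk
          rw [hK] at hk
          obtain ⟨q, hq, haq, hqmod, hres, hcnt, hb⟩ := ihPk k hk
          have hresnew : ∀ j', q < j' → j' ≤ j + 1 → γ (k+1) ≠ cls j' := by
            intro j' h1 h2
            rcases Nat.lt_or_ge j' (j+1) with h' | h'
            · exact hres j' h1 (by omega)
            · have : j' = j + 1 := by omega
              subst this
              rw [hk] at hg
              exact hg
          have hcntnew : j + 1 - q < n := by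
            by_contra hc
            push_neg at hc
            obtain ⟨j'', h1, h2, h3⟩ := window n hn ((γ (k+1) : Fin n) : ℕ) q (γ (k+1)).2
            refine hresnew j'' h1 (by omega) ?_
            apply Fin.ext
            simp only [hcls]
            exact h3.symm
          refine ⟨q, by omega, haq, hqmod, hresnew, hcntnew, ?_⟩
          rw [hA]
          have h1 : e (cls (j+1)) (a j) ≤ Ψ (a j) := heΨ _ _
          have h2 : Ψ (a j) ≤ Ψ (Ψ^[j-q] (ynth k)) := hΨmono hb
          have h3 : Ψ (Ψ^[j-q] (ynth k)) = Ψ^[(j-q)+1] (ynth k) :=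
            (Function.iterate_succ_apply' Ψ (j-q) (ynth k)).symm
          have h4 : (j+1) - q = (j-q) + 1 := by omega
          rw [h4]
          omega
  have hasm : StrictMono a :=
    strictMono_nat_of_lt_succ (fun j => ((hInv (j+1)).2.1 j (Nat.lt_succ_self j)).1)
  have hκstep : ∀ j, κ (j+1) = κ j ∨ κ (j+1) = κ j + 1 := by
    intro j
    rcases hcase j with ⟨_, _, hK⟩ | ⟨_, _, hK⟩
    · exact Or.inr hK
    · exact Or.inl hK
  have hgrow : ∀ j, ∃ j', j < j' ∧ κ j' = κ j + 1 := by
    intro j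
    by_cases hex : ∃ j', j < j' ∧ κ j' = κ j + 1
    · exact hex
    · exfalso
      push_neg at hex
      have hconst : ∀ t, κ (j + t) = κ j := by
        intro t
        induction t with
        | zero => rfl
        | succ t iht =>
          rcases hκstep (j+t) with h | h
          · show κ ((j+t)+1) = κ j
            rw [h, iht]
          · exfalso
            refine hex ((j+t)+1) (by omega) ?_
            rw [h, iht]
      obtain ⟨j'', h1, h2, h3⟩ := window n hn ((γ (κ j) : Fin n) : ℕ) j (γ (κ j)).2
      set j₂ := j'' - 1 with hj₂
      have hj''eq : j'' = j₂ + 1 := by omega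
      have hκpre : κ j₂ = κ j := by
        have : j₂ = j + (j₂ - j) := by omega
        rw [this]
        exact hconst _
      rcases hcase j₂ with ⟨hg, _, hK⟩ | ⟨hg, _, hK⟩
      · refine hex j'' h1 ?_
        rw [hj''eq, hK, hκpre]
      · refine hg ?_
        rw [hκpre, ← hj''eq]
        apply Fin.ext
        simp only [hcls]
        exact h3.symm
  have hreach : ∀ k, ∃ j, κ j = k + 1 := by
    intro k
    induction k with
    | zero =>
      rcases hcase0 with ⟨_, _, hK⟩ | ⟨_, _, hK⟩
      · exact ⟨0, by omega⟩
      · obtain ⟨j', _, h⟩ := hgrow 0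
        rw [hK] at h
        exact ⟨j', h⟩
    | succ k ihk =>
      obtain ⟨j, hj⟩ := ihk
      obtain ⟨j', _, h⟩ := hgrow j
      rw [hj] at h
      exact ⟨j', h⟩
  have hplace : ∀ k, ∃ q, a q = ynth k ∧ q % n = ((γ k : Fin n) : ℕ) := by
    intro k
    obtain ⟨j, hj⟩ := hreach k
    obtain ⟨q, _, haq, hqmod, _⟩ := (hInv j).2.2.2 k hj
    exact ⟨q, haq, hqmod⟩
  refine ⟨a, hasm, ?_, fun j => (hInv j).1, fun j m hm => ((hInv j).2.1 m hm).2⟩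
  intro i
  refine Filter.mem_of_superset (hZD i) ?_
  intro x hx
  have hxY : x ∈ Y := Set.mem_iUnion.2 ⟨i, hx⟩
  obtain ⟨k, hk⟩ := hysurj x hxY
  have hγk : γ k = i := by
    by_contra hne
    exact hZdisj (γ k) i hne x (hk ▸ hγ k) hx
  obtain ⟨q, haq, hqmod⟩ := hplace k
  exact ⟨q, by rw [hqmod, hγk], by rw [haq, hk]⟩

end SV5

namespace SV6
open SV SV2 SV3 SV4 SV5

lemma setIdx_range (a : ℕ → ℕ) (ha : StrictMono a) (j : ℕ) :
    setIdx (Set.range a) (a j) = j := by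
  have h1 : {y ∈ Set.range a | y < a j} = a '' (Set.Iio j) := by
    ext y
    constructor
    · rintro ⟨⟨m, rfl⟩, hlt⟩
      exact ⟨m, ha.lt_iff_lt.1 hlt, rfl⟩
    · rintro ⟨m, hm, rfl⟩
      exact ⟨⟨m, rfl⟩, ha hm⟩
  rw [setIdx, h1, Set.ncard_image_of_injective _ ha.injective]
  have h2 : (Set.Iio j) = (↑(Finset.range j) : Set ℕ) := by
    ext m; simp
  rw [h2, Set.ncard_coe_finset, Finset.card_range]

theorem main (n : ℕ) (hn : 0 < n) (D : Fin n → Ultrafilter ℕ)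
    (hRam : ∀ i : Fin n, IsRamseyUF (D i)) (hRK : PairwiseNotRKEquiv D)
    (I : Set (QCond n))
    (hsub : ∀ p ∈ I, InQD D p)
    (hopen : ∀ p q : QCond n, InQD D p → InQD D q → QLE n p q → q ∈ I → p ∈ I)
    (hdense : ∀ p : QCond n, InQD D p → ∃ q : QCond n, InQD D q ∧ QLE n q p ∧ q ∈ I)
    (R : Set (Finset ℕ))
    (hbase : ∀ w : Finset ℕ, (∃ p ∈ I, p.w = w) → w ∈ R)
    (hstep : ∀ w : Finset ℕ,
      (∃ A : Set ℕ, A ∈ D ⟨w.card % n, Nat.mod_lt _ hn⟩ ∧ ∀ k ∈ A, insert k w ∈ R) →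
      w ∈ R) :
    ∀ w : Finset ℕ, w ∈ R := by
  classical
  intro w₀
  by_contra hw₀
  set mlow : ℕ := w₀.sup id with hmlow
  have hwle : ∀ y ∈ w₀, y ≤ mlow := fun y hy => Finset.le_sup (f := id) hy
  set m' : ℕ := w₀.card with hm'
  set Bv : Finset ℕ → Set ℕ := fun v => {k | insert k v ∉ R} with hBvdef
  have hBv : ∀ v : Finset ℕ, v ∉ R → Bv v ∈ D ⟨v.card % n, Nat.mod_lt _ hn⟩ := by
    intro v hv
    by_contra hc
    have hcomp : (Bv v)ᶜ ∈ D ⟨v.card % n, Nat.mod_lt _ hn⟩ :=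
      Ultrafilter.compl_mem_iff_notMem.2 hc
    refine hv (hstep v ⟨(Bv v)ᶜ, hcomp, ?_⟩)
    intro k hk
    simp only [hBvdef, Set.mem_compl_iff, Set.mem_setOf_eq, not_not] at hk
    exact hk
  -- the constraint sets
  set G : Fin n → ℕ → Set ℕ := fun c m =>
    {x | m < x} ∩ ⋂ (s : Finset ℕ), ⋂ (_ : s ∈ (Finset.Ioc mlow m).powerset),
      ⋂ (_ : (m' + s.card) % n = (c : ℕ)), ⋂ (_ : w₀ ∪ s ∉ R), Bv (w₀ ∪ s)
    with hGdef
  have hcardU : ∀ (s : Finset ℕ), (∀ y ∈ s, mlow < y) → (w₀ ∪ s).card = m' + s.card := by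
    intro s hs
    have hdisj : Disjoint w₀ s := by
      rw [Finset.disjoint_left]
      intro y hy hys
      exact absurd (hwle y hy) (by have := hs y hys; omega)
    rw [Finset.card_union_of_disjoint hdisj]
  have hBvC : ∀ (c : Fin n) (s : Finset ℕ), (∀ y ∈ s, mlow < y) →
      (m' + s.card) % n = (c : ℕ) → w₀ ∪ s ∉ R → Bv (w₀ ∪ s) ∈ D c := by
    intro c s hgt hmod hnR
    have h1 := hBv (w₀ ∪ s) hnR
    have h2 : (⟨(w₀ ∪ s).card % n, Nat.mod_lt _ hn⟩ : Fin n) = c := by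
      apply Fin.ext
      simp only
      rw [hcardU s hgt, hmod]
    rwa [h2] at h1
  have hG : ∀ (c : Fin n) (m : ℕ), G c m ∈ D c := by
    intro c m
    refine Filter.inter_mem (cofinite_mem (hRam c) m) ?_
    refine (Filter.biInter_finset_mem ((Finset.Ioc mlow m).powerset)).2 ?_
    intro s hsP
    by_cases h2 : (m' + s.card) % n = (c : ℕ)
    · by_cases h3 : w₀ ∪ s ∉ R
      · have heq : (⋂ (_ : (m' + s.card) % n = (c : ℕ)), ⋂ (_ : w₀ ∪ s ∉ R),
            Bv (w₀ ∪ s)) = Bv (w₀ ∪ s) := by simp [h2, h3]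
        rw [heq]
        refine hBvC c s ?_ h2 h3
        intro y hy
        exact (Finset.mem_Ioc.1 (Finset.mem_powerset.1 hsP hy)).1
      · have heq : (⋂ (_ : (m' + s.card) % n = (c : ℕ)), ⋂ (_ : w₀ ∪ s ∉ R),
            Bv (w₀ ∪ s)) = Set.univ := by simp [h2, h3]
        rw [heq]
        exact Filter.univ_mem
    · have heq : (⋂ (_ : (m' + s.card) % n = (c : ℕ)), ⋂ (_ : w₀ ∪ s ∉ R),
          Bv (w₀ ∪ s)) = Set.univ := by simp [h2]
      rw [heq]
      exact Filter.univ_mem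
  have hanti : ∀ (c : Fin n) (m m2 : ℕ), m ≤ m2 → G c m2 ⊆ G c m := by
    intro c m m2 hm x hx
    obtain ⟨hx1, hx2⟩ := hx
    refine ⟨by simp only [Set.mem_setOf_eq] at hx1 ⊢; omega, ?_⟩
    simp only [Set.mem_iInter] at hx2 ⊢
    intro s hsP hc2 hc3
    refine hx2 s ?_ hc2 hc3
    refine Finset.mem_powerset.2 ?_
    refine (Finset.mem_powerset.1 hsP).trans ?_
    exact Finset.Ioc_subset_Ioc le_rfl hm
  have hgt : ∀ (c : Fin n) (m x : ℕ), x ∈ G c m → m < x := by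
    intro c m x hx
    exact hx.1
  -- get the master condition's infinite part
  obtain ⟨a, hasm, hslice, hF2, hF3⟩ :=
    core n hn D hRam hRK G hG hanti hgt mlow
  have haIoi : ∀ j, mlow < a j := fun j => hgt _ _ _ (hF2 j)
  have hAinf : (Set.range a).Infinite := Set.infinite_range_of_injective hasm.injective
  set p : QCond n := ⟨w₀, Set.range a, hAinf⟩ with hpdef
  have hpD : InQD D p := by
    intro i
    have h1 : sliceMod n (Set.range a) (i : ℕ) = {x | ∃ j, j % n = (i : ℕ) ∧ a j = x} := by
      ext x
      constructor
      · rintro ⟨⟨j, rfl⟩, hmod⟩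
        rw [setIdx_range a hasm j] at hmod
        exact ⟨j, hmod, rfl⟩
      · rintro ⟨j, hmod, rfl⟩
        exact ⟨⟨j, rfl⟩, by rw [setIdx_range a hasm j]; exact hmod⟩
    show sliceMod n (Set.range a) (i : ℕ) ∈ D i
    rw [h1]
    exact hslice i
  obtain ⟨q, hqD, hqle, hqI⟩ := hdense p hpD
  obtain ⟨hqw_sub, hqw_new, hq_sl, _⟩ := hqle
  set sq : Finset ℕ := q.w \ w₀ with hsqdef
  have hqw_eq : q.w = w₀ ∪ sq := by
    rw [hsqdef, Finset.union_sdiff_of_subset hqw_sub]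
  -- every new element is in the range of a, with matching index class
  have hkey : ∀ x ∈ sq, (∃ j, a j = x ∧ j % n = setIdx (↑q.w) x % n) := by
    intro x hx
    have hxq : x ∈ q.w := (Finset.mem_sdiff.1 hx).1
    have hxnw : x ∉ w₀ := (Finset.mem_sdiff.1 hx).2
    have hilt : setIdx (↑q.w) x % n < n := Nat.mod_lt _ hn
    have h1 : x ∈ sliceMod n (↑q.w) (setIdx (↑q.w) x % n) := ⟨hxq, rfl⟩
    have h2 : x ∉ sliceMod n (↑w₀) (setIdx (↑q.w) x % n) := by
      intro h
      exact hxnw (by exact_mod_cast h.1)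
    have h3 := hq_sl _ hilt ⟨h1, h2⟩
    obtain ⟨⟨j, rfl⟩, hmod⟩ := h3
    rw [setIdx_range a hasm j] at hmod
    exact ⟨j, rfl, hmod⟩
  have hsq_gt : ∀ x ∈ sq, ∀ y ∈ w₀, y < x := by
    intro x hx y hy
    obtain ⟨j, hj, _⟩ := hkey x hx
    have := haIoi j
    have := hwle y hy
    omega
  -- position of new elements in q.w
  have hidx : ∀ x ∈ sq, setIdx (↑q.w) x = m' + (sq.filter (fun y => y < x)).card := by
    intro x hx
    have h1 : {y ∈ (↑q.w : Set ℕ) | y < x} = (↑(q.w.filter (fun y => y < x)) : Set ℕ) := by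
      ext y; simp [Finset.mem_filter]
    rw [setIdx, h1, Set.ncard_coe_finset]
    rw [hqw_eq, Finset.filter_union]
    have h2 : w₀.filter (fun y => y < x) = w₀ :=
      Finset.filter_true_of_mem (fun y hy => hsq_gt x hx y hy)
    rw [h2]
    refine Finset.card_union_of_disjoint ?_
    have : Disjoint w₀ sq := Finset.disjoint_sdiff
    exact this.mono_right (Finset.filter_subset _ _)
  -- the chain argument
  have hchain : ∀ N (s' : Finset ℕ), s'.card = N → s' ⊆ sq →
      (∀ x ∈ s', ∀ y ∈ sq, y < x → y ∈ s') → w₀ ∪ s' ∉ R := by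
    intro N
    induction N using Nat.strong_induction_on with
    | _ N ih =>
      intro s' hcard hssub hdown
      rcases Finset.eq_empty_or_nonempty s' with rfl | hne
      · simpa using hw₀
      · set x := s'.max' hne with hxdef
        have hxs' : x ∈ s' := s'.max'_mem hne
        set s'' := s'.erase x with hs''def
        have hs''sub : s'' ⊆ sq := (Finset.erase_subset _ _).trans hssub
        have hs''lt : ∀ z ∈ s'', z < x := by
          intro z hz
          have h1 : z ≤ x := s'.le_max' z (Finset.mem_of_mem_erase hz)
          have h2 : z ≠ x := Finset.ne_of_mem_erase hz
          omega
        have hs''down : ∀ z ∈ s'', ∀ y ∈ sq, y < z → y ∈ s'' := by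
          intro z hz y hy hyz
          have hys' : y ∈ s' := hdown z (Finset.mem_of_mem_erase hz) y hy hyz
          refine Finset.mem_erase.2 ⟨?_, hys'⟩
          have := hs''lt z hz
          omega
        have hs''card : s''.card < N := by
          rw [← hcard, hs''def]
          exact Finset.card_erase_lt_of_mem hxs'
        have hIH : w₀ ∪ s'' ∉ R := ih s''.card hs''card s'' rfl hs''sub hs''down
        -- the filtered set is s''
        have hfilt : sq.filter (fun y => y < x) = s'' := by
          ext z
          simp only [Finset.mem_filter]
          constructor
          · rintro ⟨hz1, hz2⟩
            have := hdown x hxs' z hz1 hz2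
            exact Finset.mem_erase.2 ⟨by omega, this⟩
          · intro hz
            exact ⟨hs''sub hz, hs''lt z hz⟩
        have hxsq : x ∈ sq := hssub hxs'
        obtain ⟨j, haj, hjmod⟩ := hkey x hxsq
        have hjidx : setIdx (↑q.w) x = m' + s''.card := by
          rw [hidx x hxsq, hfilt]
        have hjmod' : j % n = (m' + s''.card) % n := by
          rw [hjmod, hjidx]
        have hins : insert x (w₀ ∪ s'') = w₀ ∪ s' := by
          rw [← Finset.union_insert, hs''def, Finset.insert_erase hxs']
        have hcond2 : (m' + s''.card) % n = ((⟨j % n, Nat.mod_lt _ hn⟩ : Fin n) : ℕ) := by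
          simpa using hjmod'.symm
        rcases Finset.eq_empty_or_nonempty s'' with hs''emp | hs''ne
        · have hxG := hF2 j
          have hx2 := hxG.2
          simp only [Set.mem_iInter] at hx2
          have hcond1 : s'' ∈ (Finset.Ioc mlow mlow).powerset :=
            Finset.mem_powerset.2 (by rw [hs''emp]; exact Finset.empty_subset _)
          have hmem := hx2 s'' hcond1 hcond2 hIH
          rw [haj] at hmem
          simp only [hBvdef, Set.mem_setOf_eq] at hmem
          rw [hins] at hmem
          exact hmem
        · have hkms'' : s''.max' hs''ne ∈ s'' := s''.max'_mem hs''ne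
          have hkmsq : s''.max' hs''ne ∈ sq := hs''sub hkms''
          obtain ⟨j', haj', hj'mod⟩ := hkey _ hkmsq
          have hajlt : a j' < a j := by
            rw [haj, haj']
            exact hs''lt _ hkms''
          have hj'j : j' < j := hasm.lt_iff_lt.mp hajlt
          have hxG := hF3 j j' hj'j
          have hx2 := hxG.2
          simp only [Set.mem_iInter] at hx2
          have hcond1 : s'' ∈ (Finset.Ioc mlow (a j')).powerset := by
            refine Finset.mem_powerset.2 ?_
            intro z hz
            refine Finset.mem_Ioc.2 ⟨?_, ?_⟩
            · obtain ⟨jz, hjz, _⟩ := hkey z (hs''sub hz)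
              rw [← hjz]
              exact haIoi jz
            · rw [haj']
              exact s''.le_max' z hz
          have hmem := hx2 s'' hcond1 hcond2 hIH
          rw [haj] at hmem
          simp only [hBvdef, Set.mem_setOf_eq] at hmem
          rw [hins] at hmem
          exact hmem
  have hfin : w₀ ∪ sq ∉ R := by
    refine hchain sq.card sq rfl subset_rfl ?_
    intro x hx y hy _
    exact hy
  rw [← hqw_eq] at hfin
  exact hfin (hbase q.w ⟨q, hqI, rfl⟩)

end SV6

/-- Lemma 1.6 (the rank `rk_I` is never `∞`): for pairwise not RK-equivalent Ramsey
ultrafilters `D 0, …, D (n-1)` and an open dense `I ⊆ Q(D 0, …, D (n-1))`, every set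
`R` of finite subsets of ℕ that is closed under the two rank-generating clauses
(i) `w ∈ R` whenever `(w, A) ∈ I` for some `A`, and
(ii) `w ∈ R` whenever there is `A ∈ D (|w| mod n)` with `w ∪ {k} ∈ R` for all `k ∈ A`,
contains every finite subset of ℕ.  (In particular the least such set does.) -/
theorem stmt2 (n : ℕ) (hn : 0 < n) (D : Fin n → Ultrafilter ℕ)
    (hRam : ∀ i : Fin n, IsRamseyUF (D i)) (hRK : PairwiseNotRKEquiv D)
    (I : Set (QCond n))
    (hsub : ∀ p ∈ I, InQD D p)
    (hopen : ∀ p q : QCond n, InQD D p → InQD D q → QLE n p q → q ∈ I → p ∈ I)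
    (hdense : ∀ p : QCond n, InQD D p → ∃ q : QCond n, InQD D q ∧ QLE n q p ∧ q ∈ I)
    (R : Set (Finset ℕ))
    (hbase : ∀ w : Finset ℕ, (∃ p ∈ I, p.w = w) → w ∈ R)
    (hstep : ∀ w : Finset ℕ,
      (∃ A : Set ℕ, A ∈ D ⟨w.card % n, Nat.mod_lt _ hn⟩ ∧ ∀ k ∈ A, insert k w ∈ R) →
      w ∈ R) :
    ∀ w : Finset ℕ, w ∈ R :=
  SV6.main n hn D hRam hRK I hsub hopen hdense R hbase hstep
end

section
/- Let 0 < n < ω. The forcing Q = Q^n has the pure decision property, in the following combinatorial form: whenever I_0, I_1 ⊆ Q are open sets with I_0 ∩ I_1 = ∅ and I_0 ∪ I_1 dense in Q, then for every condition p ∈ Q there exist q ≤⁰ p and i ∈ {0,1} such that no extension of q belongs to I_{1−i} (equivalently, every extension of q lying in I_0 ∪ I_1 lies in I_i). -/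
namespace PD

lemma below_finite (A : Set ℕ) (x : ℕ) : {y ∈ A | y < x}.Finite :=
  (Set.finite_Iio x).subset (fun y hy => hy.2)

lemma setIdx_lt_setIdx {A : Set ℕ} {x z : ℕ} (hx : x ∈ A) (hxz : x < z) :
    setIdx A x < setIdx A z := by
  apply Set.ncard_lt_ncard _ (below_finite A z)
  constructor
  · exact fun y hy => ⟨hy.1, hy.2.trans hxz⟩
  · intro h
    exact absurd ((h ⟨hx, hxz⟩).2) (lt_irrefl x)

lemma setIdx_mono {A : Set ℕ} {x z : ℕ} (hxz : x ≤ z) : setIdx A x ≤ setIdx A z :=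
  Set.ncard_le_ncard (fun y hy => ⟨hy.1, lt_of_lt_of_le hy.2 hxz⟩) (below_finite A z)

lemma lt_of_setIdx_lt {A : Set ℕ} {x z : ℕ} (h : setIdx A x < setIdx A z) : x < z := by
  by_contra hc
  exact absurd (setIdx_mono (not_lt.mp hc)) (not_le.mpr h)

lemma setIdx_injOn (A : Set ℕ) : Set.InjOn (setIdx A) A := by
  intro x hx z hz h
  by_contra hne
  rcases Nat.lt_or_ge x z with hlt | hge
  · exact absurd h (Nat.ne_of_lt (setIdx_lt_setIdx hx hlt))
  · rcases Nat.lt_or_ge z x with hlt' | hge'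
    · exact absurd h.symm (Nat.ne_of_lt (setIdx_lt_setIdx hz hlt'))
    · exact hne (le_antisymm hge' hge)

/-- surjectivity of the index onto ℕ for infinite sets -/
lemma setIdx_surj {A : Set ℕ} (hA : A.Infinite) : ∀ j : ℕ, ∃ x ∈ A, setIdx A x = j := by
  intro j
  induction j with
  | zero =>
      refine ⟨sInf A, Nat.sInf_mem hA.nonempty, ?_⟩
      unfold setIdx
      rw [Set.ncard_eq_zero (below_finite _ _)]
      ext y; simp only [Set.mem_setOf_eq, Set.mem_empty_iff_false, iff_false]
      rintro ⟨hyA, hy⟩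
      exact absurd hy (not_lt.mpr (Nat.sInf_le hyA))
  | succ j ih =>
      obtain ⟨x, hxA, hx⟩ := ih
      have hA' : {y ∈ A | x < y}.Infinite := by
        have : {y ∈ A | x < y} = A \ {y | y ≤ x} := by
          ext y; simp [Set.mem_setOf_eq, Set.mem_diff, not_le, and_comm]
        rw [this]
        exact hA.diff ((Set.finite_Iic x).subset (fun y hy => hy))
      set x' := sInf {y ∈ A | x < y} with hx'
      have hx'mem : x' ∈ {y ∈ A | x < y} := Nat.sInf_mem hA'.nonempty
      refine ⟨x', hx'mem.1, ?_⟩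
      have hset : {y ∈ A | y < x'} = insert x {y ∈ A | y < x} := by
        ext y
        simp only [Set.mem_setOf_eq, Set.mem_insert_iff]
        constructor
        · rintro ⟨hyA, hy⟩
          rcases Nat.lt_or_ge y x with h1 | h2
          · exact Or.inr ⟨hyA, h1⟩
          · rcases Nat.eq_or_lt_of_le h2 with h3 | h4
            · exact Or.inl h3.symm
            · exact absurd hy (not_lt.mpr (Nat.sInf_le ⟨hyA, h4⟩))
        · rintro (rfl | ⟨hyA, hy⟩)
          · exact ⟨hxA, hx'mem.2⟩
          · exact ⟨hyA, hy.trans hx'mem.2⟩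
      unfold setIdx
      rw [hset, Set.ncard_insert_of_notMem (by simp) (below_finite A x)]
      rw [← hx]; rfl

lemma setIdx_coe (F : Finset ℕ) (x : ℕ) : setIdx (↑F) x = (F.filter (· < x)).card := by
  unfold setIdx
  rw [← Set.ncard_coe_finset]
  congr 1
  ext y; simp [Finset.mem_filter]

/-- index in the set of elements with index ≥ t -/
lemma setIdx_shrink {A : Set ℕ} (hA : A.Infinite) (t : ℕ) {x : ℕ} (hx : x ∈ A)
    (hxt : t ≤ setIdx A x) :
    setIdx {y ∈ A | t ≤ setIdx A y} x = setIdx A x - t := by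
  have himg : setIdx A '' {y ∈ {y ∈ A | t ≤ setIdx A y} | y < x} = Set.Ico t (setIdx A x) := by
    ext j
    simp only [Set.mem_image, Set.mem_setOf_eq, Set.mem_Ico]
    constructor
    · rintro ⟨y, ⟨⟨hyA, hyt⟩, hyx⟩, rfl⟩
      exact ⟨hyt, setIdx_lt_setIdx hyA hyx⟩
    · rintro ⟨hjt, hjx⟩
      obtain ⟨y, hyA, rfl⟩ := setIdx_surj hA j
      exact ⟨y, ⟨⟨hyA, hjt⟩, lt_of_setIdx_lt hjx⟩, rfl⟩
  have hinj : Set.InjOn (setIdx A) {y ∈ {y ∈ A | t ≤ setIdx A y} | y < x} :=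
    (setIdx_injOn A).mono (fun y hy => hy.1.1)
  have := Set.ncard_image_of_injOn hinj
  show Set.ncard _ = _
  rw [← this, himg]
  rw [show Set.Ico t (setIdx A x) = ↑(Finset.Ico t (setIdx A x)) by simp,
    Set.ncard_coe_finset, Nat.card_Ico]


lemma shrink_infinite {A : Set ℕ} (hA : A.Infinite) (t : ℕ) :
    {y ∈ A | t ≤ setIdx A y}.Infinite := by
  apply Set.infinite_of_injective_forall_mem
    (f := fun j => Classical.choose (setIdx_surj hA (t + j)))
  · intro a b hab
    have ha := Classical.choose_spec (setIdx_surj hA (t + a))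
    have hb := Classical.choose_spec (setIdx_surj hA (t + b))
    simp only [] at hab
    have : t + a = t + b := by rw [← ha.2, ← hb.2, hab]
    omega
  · intro j
    have hj := Classical.choose_spec (setIdx_surj hA (t + j))
    exact ⟨hj.1, by omega⟩

lemma setIdx_gt_of_gt {A : Set ℕ} {x b : ℕ} (hx : x ∈ A) (h : setIdx A (b+1) ≤ setIdx A x) :
    b < x := by
  by_contra hc
  have h2 : setIdx A x < setIdx A (b+1) := setIdx_lt_setIdx hx (by omega)
  omega

/-- The master shrink lemma: inside any infinite `B` and above any bound `b` there is
an infinite subset whose indices agree with those in `B` mod `n`. -/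
lemma shrink0 {B : Set ℕ} (hB : B.Infinite) (n b : ℕ) (hn : 0 < n) :
    ∃ A' : Set ℕ, A' ⊆ B ∧ A'.Infinite ∧ (∀ x ∈ A', b < x) ∧
      (∀ x ∈ A', setIdx A' x % n = setIdx B x % n) := by
  set t := n * (setIdx B (b+1)) + n * 0 with ht
  have htmul : n ∣ t := ⟨setIdx B (b+1) + 0, by ring⟩
  have htb : setIdx B (b+1) ≤ t := by
    have : 1 * setIdx B (b+1) ≤ n * setIdx B (b+1) := Nat.mul_le_mul_right _ hn
    omega
  refine ⟨{y ∈ B | t ≤ setIdx B y}, fun y hy => hy.1, shrink_infinite hB t, ?_, ?_⟩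
  · intro x hx
    exact setIdx_gt_of_gt hx.1 (le_trans htb hx.2)
  · intro x hx
    rw [setIdx_shrink hB t hx.1 hx.2]
    obtain ⟨c, hc⟩ := htmul
    have hle := hx.2
    have hrw : setIdx B x = (setIdx B x - t) + n * c := by omega
    conv_rhs => rw [hrw]
    rw [Nat.add_mul_mod_self_left]

lemma setIdx_range {f : ℕ → ℕ} (hf : StrictMono f) (m : ℕ) :
    setIdx (Set.range f) (f m) = m := by
  have : {y ∈ Set.range f | y < f m} = f '' Set.Iio m := by
    ext y
    simp only [Set.mem_setOf_eq, Set.mem_image, Set.mem_range, Set.mem_Iio]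
    constructor
    · rintro ⟨⟨j, rfl⟩, hj⟩
      exact ⟨j, hf.lt_iff_lt.mp hj, rfl⟩
    · rintro ⟨j, hj, rfl⟩
      exact ⟨⟨j, rfl⟩, hf hj⟩
  unfold setIdx
  rw [this, Set.ncard_image_of_injective _ hf.injective,
    show Set.Iio m = ↑(Finset.Iio m) by simp, Set.ncard_coe_finset]
  simp

lemma setIdx_union_split {w s : Finset ℕ} {x : ℕ} (hd : Disjoint w s)
    (hws : ∀ y ∈ w, y < x) :
    setIdx (↑(w ∪ s)) x = w.card + (s.filter (· < x)).card := by
  rw [setIdx_coe, Finset.filter_union, Finset.filter_true_of_mem hws,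
    Finset.card_union_of_disjoint (hd.mono_right (Finset.filter_subset _ _))]


section Main

variable (n : ℕ) (A0 : Set ℕ) (w : Finset ℕ) (I1 : Set (QCond n))

/-- `X` is an aligned subset of the base `A0`. -/
def Al (X : Set ℕ) : Prop :=
  X ⊆ A0 ∧ X.Infinite ∧ ∀ x ∈ X, setIdx X x % n = setIdx A0 x % n

/-- `s` is a legal stem extension over `w` taken from `A0`. -/
def Stem (s : Finset ℕ) : Prop :=
  (↑s : Set ℕ) ⊆ A0 ∧
  ∀ x ∈ s, setIdx A0 x % n = (w.card + (s.filter (· < x)).card) % n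

/-- `Z` contains a pair extending stem `s` which lands in `I1`. -/
def Pr (s : Finset ℕ) (Z : Set ℕ) : Prop :=
  ∃ (u : Finset ℕ) (D : Set ℕ) (hD : D.Infinite),
    Stem n A0 w (s ∪ u) ∧ (↑u : Set ℕ) ⊆ Z ∧ (∀ x ∈ u, ∀ y ∈ w ∪ s, y < x) ∧
    Al n A0 D ∧ D ⊆ Z ∧ (⟨w ∪ (s ∪ u), D, hD⟩ : QCond n) ∈ I1

def Acc (s : Finset ℕ) (Z : Set ℕ) : Prop :=
  ∀ Z', Al n A0 Z' → Z' ⊆ Z → Pr n A0 w I1 s Z'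

def HitAll (s : Finset ℕ) (Z : Set ℕ) : Prop :=
  ∀ D, ∀ hD : D.Infinite, Al n A0 D → D ⊆ Z → (⟨w ∪ s, D, hD⟩ : QCond n) ∈ I1

def Good (s : Finset ℕ) (Z : Set ℕ) : Prop :=
  Acc n A0 w I1 s Z ∨ HitAll n A0 w I1 s Z

variable {n A0 w I1}

lemma Pr_mono {s : Finset ℕ} {Z Z' : Set ℕ} (h : Z ⊆ Z') (hp : Pr n A0 w I1 s Z) :
    Pr n A0 w I1 s Z' := by
  obtain ⟨u, D, hD, h1, h2, h3, h4, h5, h6⟩ := hp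
  exact ⟨u, D, hD, h1, fun x hx => h (h2 hx), h3, h4, fun x hx => h (h5 hx), h6⟩

lemma Acc_mono {s : Finset ℕ} {Z Z' : Set ℕ} (h : Z' ⊆ Z) (ha : Acc n A0 w I1 s Z) :
    Acc n A0 w I1 s Z' := fun W hW hWZ => ha W hW (hWZ.trans h)

lemma HitAll_mono {s : Finset ℕ} {Z Z' : Set ℕ} (h : Z' ⊆ Z) (ha : HitAll n A0 w I1 s Z) :
    HitAll n A0 w I1 s Z' := fun D hD hAl hDZ => ha D hD hAl (hDZ.trans h)

lemma Good_mono {s : Finset ℕ} {Z Z' : Set ℕ} (h : Z' ⊆ Z) (hg : Good n A0 w I1 s Z) :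
    Good n A0 w I1 s Z' :=
  hg.imp (Acc_mono h) (HitAll_mono h)

lemma shrinkAl (hn : 0 < n) {Z : Set ℕ} (hZ : Al n A0 Z) (b : ℕ) :
    ∃ Z', Al n A0 Z' ∧ Z' ⊆ {x ∈ Z | b < x} := by
  obtain ⟨Z', h1, h2, h3, h4⟩ := shrink0 hZ.2.1 n b hn
  refine ⟨Z', ⟨(fun x hx => hZ.1 (h1 hx)), h2, ?_⟩, fun x hx => ⟨h1 hx, h3 x hx⟩⟩
  intro x hx
  rw [h4 x hx, hZ.2.2 x (h1 hx)]

lemma classCofinal (hn : 0 < n) {Z : Set ℕ} (hZ : Al n A0 Z) (b c : ℕ) :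
    ∃ x ∈ Z, b < x ∧ setIdx A0 x % n = c % n := by
  obtain ⟨x, hxZ, hx⟩ := setIdx_surj hZ.2.1 (c % n + n * setIdx Z (b+1))
  refine ⟨x, hxZ, ?_, ?_⟩
  · apply setIdx_gt_of_gt hxZ
    have : 1 * setIdx Z (b+1) ≤ n * setIdx Z (b+1) := Nat.mul_le_mul_right _ hn
    omega
  · rw [← hZ.2.2 x hxZ, hx, Nat.add_mul_mod_self_left, Nat.mod_mod_of_dvd _ dvd_rfl]

/-- Comparator: building an extension in `QLE`. -/
lemma mkLE (hn : 0 < n) {F u : Finset ℕ} {X D : Set ℕ} (hD : D.Infinite) (hX : X.Infinite)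
    (hu : ∀ x ∈ u, x ∈ X ∧ setIdx X x % n = setIdx (↑(F ∪ u)) x % n)
    (huF : ∀ x ∈ u, ∀ y ∈ F, y < x)
    (hDX : D ⊆ X) (hcong : ∀ x ∈ D, setIdx D x % n = setIdx X x % n) :
    QLE n ⟨F ∪ u, D, hD⟩ ⟨F, X, hX⟩ := by
  refine ⟨Finset.subset_union_left, ?_, ?_, ?_⟩
  · intro x hx hxF y hy
    rcases Finset.mem_union.mp hx with h | h
    · exact absurd h hxF
    · exact huF x h y hy
  · intro i hi x hx
    simp only [Set.mem_diff, sliceMod, Set.mem_setOf_eq] at hx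
    obtain ⟨⟨hx1, hx2⟩, hx3⟩ := hx
    have hx1' : x ∈ F ∪ u := by exact_mod_cast hx1
    rcases Finset.mem_union.mp hx1' with hxF | hxu
    · exfalso
      apply hx3
      refine ⟨by exact_mod_cast hxF, ?_⟩
      rw [← hx2]
      congr 1
      rw [setIdx_coe, setIdx_coe]
      congr 1
      ext z
      simp only [Finset.mem_filter]
      constructor
      · rintro ⟨h1, h2⟩; exact ⟨Finset.mem_union.mpr (Or.inl h1), h2⟩
      · rintro ⟨hz1, h2⟩
        rcases Finset.mem_union.mp hz1 with h1 | h1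
        · exact ⟨h1, h2⟩
        · exact absurd h2 (not_lt.mpr (le_of_lt (huF z h1 x hxF)))
    · obtain ⟨hxX, hcg⟩ := hu x hxu
      exact ⟨hxX, by rw [hcg, hx2]⟩
  · intro i hi x hx
    obtain ⟨hx1, hx2⟩ := hx
    simp only at hx1 hx2 ⊢
    exact ⟨hDX hx1, by rw [← hcong x hx1]; exact hx2⟩

/-- Extraction: decomposing an extension of a condition with aligned side-set. -/
lemma extract (hn : 0 < n) {r : QCond n} {F : Finset ℕ} {X : Set ℕ} {hX : X.Infinite}
    (h : QLE n r ⟨F, X, hX⟩) :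
    r.w = F ∪ (r.w \ F) ∧ (∀ x ∈ r.w \ F, ∀ y ∈ F, y < x) ∧
    (∀ x ∈ r.w \ F, x ∈ X ∧ setIdx X x % n = setIdx (↑r.w) x % n) ∧
    r.A ⊆ X ∧ (∀ x ∈ r.A, setIdx r.A x % n = setIdx X x % n) := by
  obtain ⟨h1, h2, h3, h4⟩ := h
  refine ⟨(Finset.union_sdiff_of_subset h1).symm, ?_, ?_, ?_, ?_⟩
  · intro x hx y hy
    exact h2 x (Finset.mem_sdiff.mp hx).1 (Finset.mem_sdiff.mp hx).2 y hy
  · intro x hx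
    obtain ⟨hxw, hxF⟩ := Finset.mem_sdiff.mp hx
    have hkey := h3 (setIdx (↑r.w) x % n) (Nat.mod_lt _ hn)
    have : x ∈ sliceMod n (↑r.w) (setIdx (↑r.w) x % n) \ sliceMod n (↑F) (setIdx (↑r.w) x % n) := by
      refine ⟨⟨by exact_mod_cast hxw, rfl⟩, ?_⟩
      rintro ⟨hc, -⟩
      exact hxF (by exact_mod_cast hc)
    obtain ⟨ha, hb⟩ := hkey this
    exact ⟨ha, by rw [hb]⟩
  · intro x hx
    have hkey := h4 (setIdx r.A x % n) (Nat.mod_lt _ hn)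
    exact (hkey ⟨hx, rfl⟩).1
  · intro x hx
    have hkey := h4 (setIdx r.A x % n) (Nat.mod_lt _ hn)
    exact (hkey ⟨hx, rfl⟩).2.symm

/-- dependent-choice chain builder -/
lemma dcChain {α : Type} (P : α → Prop) (R : ℕ → α → α → Prop)
    (h : ∀ k a, P a → ∃ b, P b ∧ R k a b) (a0 : α) (h0 : P a0) :
    ∃ f : ℕ → α, f 0 = a0 ∧ (∀ k, P (f k)) ∧ ∀ k, R k (f k) (f (k+1)) := by
  have hstep : ∀ k (a : {x : α // P x}), {b : {x : α // P x} // R k a.1 b.1} := by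
    intro k a
    exact ⟨⟨Classical.choose (h k a.1 a.2), (Classical.choose_spec (h k a.1 a.2)).1⟩,
      (Classical.choose_spec (h k a.1 a.2)).2⟩
  let g : ℕ → {x : α // P x} := fun k => Nat.rec ⟨a0, h0⟩ (fun k ih => (hstep k ih).1) k
  refine ⟨fun k => (g k).1, rfl, fun k => (g k).2, fun k => ?_⟩
  exact (hstep k (g k)).2

/-- pure shrinking of the side set. -/
lemma pureLE (hn : 0 < n) {F : Finset ℕ} {D D' : Set ℕ} (hD : D.Infinite) (hD' : D'.Infinite)
    (hsub : D' ⊆ D) (hcong : ∀ x ∈ D', setIdx D' x % n = setIdx D x % n) :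
    QLE n ⟨F, D', hD'⟩ ⟨F, D, hD⟩ := by
  have h := mkLE hn (F := F) (u := ∅) hD' hD
    (fun x hx => absurd hx (Finset.notMem_empty x))
    (fun x hx => absurd hx (Finset.notMem_empty x)) hsub hcong
  rwa [Finset.union_empty] at h

lemma alCong {D D' : Set ℕ} (h1 : Al n A0 D) (h2 : Al n A0 D') (hsub : D' ⊆ D) :
    ∀ x ∈ D', setIdx D' x % n = setIdx D x % n := by
  intro x hx
  rw [h2.2.2 x hx, h1.2.2 x (hsub hx)]

/-- The Galvin step: an accepted, unrealized stem has a shrink on which every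
legal one-element extension is again accepted. -/
lemma star (hn : 0 < n)
    (hopen1 : ∀ p q : QCond n, QLE n p q → q ∈ I1 → p ∈ I1)
    {T : Set ℕ} (hT : Al n A0 T) {s : Finset ℕ}
    (hacc : Acc n A0 w I1 s T)
    (hnohit : ¬ ∃ D, ∃ hD : D.Infinite, Al n A0 D ∧ D ⊆ T ∧ (⟨w ∪ s, D, hD⟩ : QCond n) ∈ I1) :
    ∃ Z, Al n A0 Z ∧ Z ⊆ T ∧ ∀ x ∈ Z,
      setIdx A0 x % n = (w.card + s.card) % n → (∀ y ∈ w ∪ s, y < x) →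
      Acc n A0 w I1 (s ∪ {x}) Z := by
  by_contra hcon
  push_neg at hcon
  set o := (w.card + s.card) % n with ho
  set b0 := (w ∪ s).sup id with hb0
  -- every aligned subset of T has a bad legal one-element extension
  have hbad : ∀ Z, Al n A0 Z → Z ⊆ T →
      ∃ x ∈ Z, setIdx A0 x % n = o ∧ (∀ y ∈ w ∪ s, y < x) ∧
        ∃ Y, Al n A0 Y ∧ Y ⊆ Z ∧ ¬ Pr n A0 w I1 (s ∪ {x}) Y := by
    intro Z hZ hZT
    obtain ⟨x, hx1, hx2, hx3, hx4⟩ := hcon Z hZ hZT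
    refine ⟨x, hx1, hx2, hx3, ?_⟩
    by_contra hcc
    push_neg at hcc
    exact hx4 (fun Y hY hYZ => by
      by_contra hnp
      exact absurd (hcc Y hY hYZ) hnp)
  -- the DC chain
  obtain ⟨Z0, hZ0, hZ0T⟩ := shrinkAl hn hT b0
  have hchain : ∃ f : ℕ → ℕ × Set ℕ, f 0 = (b0, Z0) ∧
      (∀ k, Al n A0 (f k).2 ∧ (f k).2 ⊆ T ∧ b0 ≤ (f k).1 ∧ ∀ x ∈ (f k).2, (f k).1 < x) ∧
      ∀ k, (f (k+1)).1 ∈ (f k).2 ∧ setIdx A0 (f (k+1)).1 % n = k % n ∧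
        (f (k+1)).2 ⊆ (f k).2 ∧
        (k % n = o → ¬ Pr n A0 w I1 (s ∪ {(f (k+1)).1}) (f (k+1)).2) := by
    apply dcChain
      (P := fun a : ℕ × Set ℕ => Al n A0 a.2 ∧ a.2 ⊆ T ∧ b0 ≤ a.1 ∧ ∀ x ∈ a.2, a.1 < x)
      (R := fun k a b => b.1 ∈ a.2 ∧ setIdx A0 b.1 % n = k % n ∧ b.2 ⊆ a.2 ∧
        (k % n = o → ¬ Pr n A0 w I1 (s ∪ {b.1}) b.2))
    · rintro k ⟨b, Z⟩ ⟨hAlZ, hZT, hb0b, hZb⟩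
      by_cases hko : k % n = o
      · obtain ⟨x, hxZ, hxc, hxab, Y, hY, hYZ, hnpr⟩ := hbad Z hAlZ hZT
        obtain ⟨Z', hZ', hZ'sub⟩ := shrinkAl hn hY x
        refine ⟨(x, Z'), ⟨hZ', fun z hz => hZT (hYZ (hZ'sub hz).1), hb0b.trans (le_of_lt (hZb x hxZ)),
          fun z hz => (hZ'sub hz).2⟩, hxZ, by rw [hxc, hko], fun z hz => hYZ (hZ'sub hz).1, ?_⟩
        intro _
        intro hp
        exact hnpr (Pr_mono (fun z hz => (hZ'sub hz).1) hp)
      · obtain ⟨x, hxZ, hbx, hxc⟩ := classCofinal hn hAlZ b k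
        obtain ⟨Z', hZ', hZ'sub⟩ := shrinkAl hn hAlZ x
        exact ⟨(x, Z'), ⟨hZ', fun z hz => hZT (hZ'sub hz).1, hb0b.trans (le_of_lt (hZb x hxZ)),
          fun z hz => (hZ'sub hz).2⟩, hxZ, hxc, fun z hz => (hZ'sub hz).1,
          fun h => absurd h hko⟩
    · exact ⟨hZ0, fun z hz => (hZ0T hz).1, le_refl _, fun z hz => (hZ0T hz).2⟩
  obtain ⟨f, hf0, hP, hR⟩ := hchain
  set e : ℕ → ℕ := fun m => (f (m+1)).1 with he
  have heZ : ∀ m, e m ∈ (f m).2 := fun m => (hR m).1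
  have hemono : StrictMono e := by
    apply strictMono_nat_of_lt_succ
    intro m
    exact (hP (m+1)).2.2.2 (e (m+1)) (heZ (m+1))
  have hsubZ : ∀ k j, k ≤ j → (f j).2 ⊆ (f k).2 := by
    intro k j hkj
    induction j with
    | zero => rw [Nat.le_zero.mp hkj]
    | succ j ih =>
        rcases Nat.lt_or_ge k (j+1) with h | h
        · exact ((hR j).2.2.1).trans (ih (by omega))
        · have : k = j + 1 := by omega
          rw [this]
  have heT : ∀ m, e m ∈ T := fun m => (hP m).2.1 (heZ m)
  set W := Set.range e with hW
  have hWT : W ⊆ T := by rintro x ⟨m, rfl⟩; exact heT m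
  have hAlW : Al n A0 W := by
    refine ⟨fun x hx => hT.1 (hWT hx), Set.infinite_range_of_injective hemono.injective, ?_⟩
    rintro x ⟨m, rfl⟩
    rw [setIdx_range hemono, (hR m).2.1]
  -- tail containment: elements of W above e m lie in (f (m+1)).2
  have htail : ∀ m, ∀ x ∈ W, e m < x → x ∈ (f (m+1)).2 := by
    rintro m x ⟨j, rfl⟩ hlt
    have hmj : m < j := hemono.lt_iff_lt.mp hlt
    exact hsubZ (m+1) j hmj (heZ j)
  -- apply acceptance to W
  obtain ⟨u, D, hD, hstem, huW, hab, hAlD, hDW, hmem⟩ := hacc W hAlW hWT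
  by_cases hu : u = ∅
  · refine hnohit ⟨D, hD, hAlD, hDW.trans hWT, ?_⟩
    rw [hu, Finset.union_empty] at hmem
    exact hmem
  · have hune : u.Nonempty := Finset.nonempty_iff_ne_empty.mpr hu
    set y := u.min' hune with hy
    have hyu : y ∈ u := Finset.min'_mem u hune
    obtain ⟨m, hm⟩ := huW hyu
    -- class of y
    have hyclass : setIdx A0 y % n = o := by
      have h1 := hstem.2 y (Finset.mem_union_right s hyu)
      have h2 : (s ∪ u).filter (· < y) = s := by
        ext z
        simp only [Finset.mem_filter, Finset.mem_union]
        constructor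
        · rintro ⟨hz1 | hz1, hz2⟩
          · exact hz1
          · exact absurd hz2 (not_lt.mpr (Finset.min'_le u z hz1))
        · intro hz
          exact ⟨Or.inl hz, hab y hyu z (Finset.mem_union_right w hz)⟩
      rw [h2] at h1
      rw [h1]
    have hmo : m % n = o := by
      have h1 := (hR m).2.1
      rw [show (f (m+1)).1 = e m from rfl, hm, hyclass] at h1
      have h2 : o < n := Nat.mod_lt _ hn
      omega
    have hnpr := (hR m).2.2.2 hmo
    rw [show (f (m+1)).1 = e m from rfl, hm] at hnpr
    apply hnpr
    -- build the contradiction pair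
    set u' := u.erase y with hu'
    have hyW : y ∈ W := ⟨m, hm⟩
    have hugt : ∀ z ∈ u', y < z := by
      intro z hz
      have hzu := Finset.mem_of_mem_erase hz
      have hne := Finset.ne_of_mem_erase hz
      exact lt_of_le_of_ne (Finset.min'_le u z hzu) (Ne.symm hne)
    have hu'Z : (↑u' : Set ℕ) ⊆ (f (m+1)).2 := by
      intro z hz
      have hz' : z ∈ u' := by exact_mod_cast hz
      have hzW : z ∈ W := huW (Finset.mem_of_mem_erase hz')
      exact htail m z hzW (by rw [hm]; exact hugt z hz')
    obtain ⟨D', hAlD', hD'sub⟩ := shrinkAl hn hAlD y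
    have hD'Z : D' ⊆ (f (m+1)).2 := by
      intro z hz
      have h1 := (hD'sub hz).1
      have h2 := (hD'sub hz).2
      exact htail m z (hDW h1) (by rw [hm]; exact h2)
    have hseteq : (s ∪ {y}) ∪ u' = s ∪ u := by
      ext z
      simp only [Finset.mem_union, Finset.mem_singleton, Finset.mem_erase, hu']
      constructor
      · rintro ((h | h) | ⟨h1, h2⟩)
        · exact Or.inl h
        · exact Or.inr (h ▸ hyu)
        · exact Or.inr h2
      · rintro (h | h)
        · exact Or.inl (Or.inl h)
        · by_cases hzy : z = y
          · exact Or.inl (Or.inr hzy)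
          · exact Or.inr ⟨hzy, h⟩
    refine ⟨u', D', hAlD'.2.1, ?_, hu'Z, ?_, hAlD', hD'Z, ?_⟩
    · rw [hseteq]; exact hstem
    · intro x hx z hz
      rcases Finset.mem_union.mp hz with hz1 | hz1
      · exact hab x (Finset.mem_of_mem_erase hx) z (Finset.mem_union_left s hz1)
      · rcases Finset.mem_union.mp hz1 with hz2 | hz2
        · exact hab x (Finset.mem_of_mem_erase hx) z (Finset.mem_union_right w hz2)
        · rw [Finset.mem_singleton.mp hz2]
          exact hugt x hx
    · have hle : QLE n ⟨w ∪ (s ∪ u), D', hAlD'.2.1⟩ ⟨w ∪ (s ∪ u), D, hD⟩ :=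
        pureLE hn hD hAlD'.2.1 (fun z hz => (hD'sub hz).1)
          (alCong hAlD hAlD' (fun z hz => (hD'sub hz).1))
      have hmem' := hopen1 _ _ hle hmem
      have hfeq : w ∪ ((s ∪ {y}) ∪ u') = w ∪ (s ∪ u) := by rw [hseteq]
      exact hfeq ▸ hmem'

variable (n A0 w I1) in
def Prep (s : Finset ℕ) (Z : Set ℕ) : Prop :=
  HitAll n A0 w I1 s Z ∨
  (Acc n A0 w I1 s Z ∧ ∀ x ∈ Z, setIdx A0 x % n = (w.card + s.card) % n →
    (∀ y ∈ w ∪ s, y < x) → Acc n A0 w I1 (s ∪ {x}) Z)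

lemma Prep_mono {s : Finset ℕ} {Z Z' : Set ℕ} (h : Z' ⊆ Z) (hp : Prep n A0 w I1 s Z) :
    Prep n A0 w I1 s Z' := by
  rcases hp with h1 | ⟨h1, h2⟩
  · exact Or.inl (HitAll_mono h h1)
  · exact Or.inr ⟨Acc_mono h h1, fun x hx hc hab => Acc_mono h (h2 x (h hx) hc hab)⟩

lemma Prep_good {s : Finset ℕ} {Z : Set ℕ} (hp : Prep n A0 w I1 s Z) :
    Good n A0 w I1 s Z := by
  rcases hp with h1 | ⟨h1, h2⟩
  · exact Or.inr h1
  · exact Or.inl h1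

lemma prep (hn : 0 < n)
    (hopen1 : ∀ p q : QCond n, QLE n p q → q ∈ I1 → p ∈ I1)
    {T : Set ℕ} (hT : Al n A0 T) {s : Finset ℕ} (hg : Good n A0 w I1 s T) :
    ∃ T', Al n A0 T' ∧ T' ⊆ T ∧ Prep n A0 w I1 s T' := by
  rcases hg with hacc | hhit
  · by_cases hh : ∃ D, ∃ hD : D.Infinite, Al n A0 D ∧ D ⊆ T ∧ (⟨w ∪ s, D, hD⟩ : QCond n) ∈ I1
    · obtain ⟨D, hD, hAlD, hDT, hmem⟩ := hh
      refine ⟨D, hAlD, hDT, Or.inl ?_⟩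
      intro D' hD' hAlD' hsub
      exact hopen1 _ _ (pureLE hn hD hD' hsub (alCong hAlD hAlD' hsub)) hmem
    · obtain ⟨Z, hAlZ, hZT, hZ⟩ := star hn hopen1 hT hacc hh
      exact ⟨Z, hAlZ, hZT, Or.inr ⟨Acc_mono hZT hacc, hZ⟩⟩
  · exact ⟨T, hT, le_refl _, Or.inl hhit⟩

lemma prepAll (hn : 0 < n)
    (hopen1 : ∀ p q : QCond n, QLE n p q → q ∈ I1 → p ∈ I1)
    (L : List (Finset ℕ)) :
    ∀ {T : Set ℕ}, Al n A0 T → (∀ s ∈ L, Stem n A0 w s → Good n A0 w I1 s T) →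
    ∃ T', Al n A0 T' ∧ T' ⊆ T ∧ ∀ s ∈ L, Stem n A0 w s → Prep n A0 w I1 s T' := by
  induction L with
  | nil => exact fun hT _ => ⟨_, hT, le_refl _, fun s hs => absurd hs List.not_mem_nil⟩
  | cons a L ih =>
      intro T hT hL
      obtain ⟨T1, hT1, hT1T, hprep⟩ := ih hT (fun s hs => hL s (List.mem_cons_of_mem a hs))
      by_cases hstem : Stem n A0 w a
      · obtain ⟨T2, hT2, hT2T1, hpa⟩ :=
          prep hn hopen1 hT1 (Good_mono hT1T (hL a List.mem_cons_self hstem))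
        refine ⟨T2, hT2, hT2T1.trans hT1T, ?_⟩
        intro s hs hst
        rcases List.mem_cons.mp hs with rfl | hs'
        · exact hpa
        · exact Prep_mono hT2T1 (hprep s hs' hst)
      · refine ⟨T1, hT1, hT1T, ?_⟩
        intro s hs hst
        rcases List.mem_cons.mp hs with rfl | hs'
        · exact absurd hst hstem
        · exact hprep s hs' hst

variable (n A0 w I1) in
/-- fusion invariant -/
def FuseP (cs : List ℕ) (T : Set ℕ) : Prop :=
  Al n A0 T ∧ (∀ x ∈ cs, ∀ y ∈ T, x < y) ∧
  ∀ s : Finset ℕ, s ⊆ cs.toFinset → Stem n A0 w s → Good n A0 w I1 s T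

lemma fuseStep (hn : 0 < n) (hA0w : ∀ x ∈ A0, ∀ y ∈ w, y < x)
    (hopen1 : ∀ p q : QCond n, QLE n p q → q ∈ I1 → p ∈ I1)
    {cs : List ℕ} {T : Set ℕ} (hP : FuseP n A0 w I1 cs T) :
    ∃ c T', FuseP n A0 w I1 (cs ++ [c]) T' ∧ T' ⊆ T ∧ c ∈ T ∧
      setIdx A0 c % n = cs.length % n := by
  obtain ⟨hT, hcsT, hstems⟩ := hP
  set b := cs.toFinset.sup id with hb
  obtain ⟨Tp, hTp, hTpT, hprep⟩ := prepAll hn hopen1 cs.toFinset.powerset.toList hT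
    (fun s hs hst => hstems s (Finset.mem_powerset.mp (Finset.mem_toList.mp hs)) hst)
  obtain ⟨Ts, hTs, hTsSub⟩ := shrinkAl hn hTp b
  have hTsTp : Ts ⊆ Tp := fun x hx => (hTsSub hx).1
  obtain ⟨c, hcTs, hbc, hcclass⟩ := classCofinal hn hTs b cs.length
  obtain ⟨T', hT', hT'Sub⟩ := shrinkAl hn hTs c
  have hT'Ts : T' ⊆ Ts := fun x hx => (hT'Sub hx).1
  have hT'T : T' ⊆ T := fun x hx => hTpT (hTsTp (hT'Ts hx))
  have hcT : c ∈ T := hTpT (hTsTp hcTs)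
  have hcA0 : c ∈ A0 := hTs.1 hcTs
  have hcw : ∀ y ∈ w, y < c := hA0w c hcA0
  have hcgt : ∀ x ∈ cs, x < c := by
    intro x hx
    have : x ≤ b := Finset.le_sup (f := id) (List.mem_toFinset.mpr hx)
    omega
  refine ⟨c, T', ⟨hT', ?_, ?_⟩, hT'T, hcT, hcclass⟩
  · intro x hx y hy
    rcases List.mem_append.mp hx with h | h
    · exact hcsT x h y (hT'T hy)
    · rw [List.mem_singleton.mp h]
      exact (hT'Sub hy).2
  · intro s hs hstem
    have hsplit : (cs ++ [c]).toFinset = cs.toFinset ∪ {c} := by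
      rw [List.toFinset_append]; rfl
    by_cases hcs : c ∈ s
    · set s' := s.erase c with hs'
      have hs'sub : s' ⊆ cs.toFinset := by
        intro x hx
        have hxs := Finset.mem_of_mem_erase hx
        have hxc := Finset.ne_of_mem_erase hx
        have := hs hxs
        rw [hsplit] at this
        rcases Finset.mem_union.mp this with h | h
        · exact h
        · exact absurd (Finset.mem_singleton.mp h) hxc
      have hs'lt : ∀ x ∈ s', x < c := fun x hx => hcgt x (List.mem_toFinset.mp (hs'sub hx))
      have hstem' : Stem n A0 w s' := by
        refine ⟨?_, ?_⟩
        · intro x hx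
          have hx' : x ∈ s.erase c := by exact_mod_cast hx
          exact hstem.1 (by exact_mod_cast Finset.mem_of_mem_erase hx')
        intro x hx
        have h1 := hstem.2 x (Finset.mem_of_mem_erase hx)
        have h2 : s.filter (· < x) = s'.filter (· < x) := by
          ext z
          simp only [Finset.mem_filter, hs', Finset.mem_erase]
          constructor
          · rintro ⟨hz1, hz2⟩
            have hxc := hs'lt x hx
            exact ⟨⟨by omega, hz1⟩, hz2⟩
          · rintro ⟨⟨_, hz1⟩, hz2⟩
            exact ⟨hz1, hz2⟩
        rw [h2] at h1
        exact h1
      have hsfil : s.filter (· < c) = s' := by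
        ext z
        simp only [Finset.mem_filter, hs', Finset.mem_erase]
        constructor
        · rintro ⟨hz1, hz2⟩
          exact ⟨by omega, hz1⟩
        · rintro ⟨hz1, hz2⟩
          refine ⟨hz2, ?_⟩
          have := hs hz2
          rw [hsplit] at this
          rcases Finset.mem_union.mp this with h | h
          · exact hcgt z (List.mem_toFinset.mp h)
          · exact absurd (Finset.mem_singleton.mp h) hz1
      have hscard : setIdx A0 c % n = (w.card + s'.card) % n := by
        have := hstem.2 c hcs
        rw [hsfil] at this
        exact this
      have hseq : s' ∪ {c} = s := by
        rw [Finset.union_comm]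
        rw [show ({c} : Finset ℕ) ∪ s' = insert c s' by ext z; simp [or_comm, hs'],
          Finset.insert_erase hcs]
      have hdisjws' : Disjoint w s' := by
        rw [Finset.disjoint_left]
        intro a haw has'
        have : a ∈ A0 := hstem'.1 (by exact_mod_cast has')
        exact absurd (hA0w a this a haw) (lt_irrefl a)
      have hPrep := hprep s' (Finset.mem_toList.mpr (Finset.mem_powerset.mpr hs'sub)) hstem'
      rcases hPrep with hHit | ⟨hAcc', hext⟩
      · refine Or.inr ?_
        intro D hD hAlD hDT'
        have hwlt : ∀ y ∈ w ∪ s', y < c := by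
          intro y hy
          rcases Finset.mem_union.mp hy with h | h
          · exact hcw y h
          · exact hs'lt y h
        have hcards : setIdx (↑((w ∪ s') ∪ {c})) c = w.card + s'.card := by
          rw [setIdx_union_split (by
              rw [Finset.disjoint_left]
              intro a ha hac
              rw [Finset.mem_singleton.mp hac] at ha
              exact absurd (hwlt c ha) (lt_irrefl c)) hwlt]
          rw [show Finset.filter (fun x => x < c) {c} = ∅ by
            ext z; simp only [Finset.mem_filter, Finset.mem_singleton, Finset.notMem_empty,
              iff_false]; rintro ⟨rfl, hz⟩; exact absurd hz (lt_irrefl z)]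
          simp [Finset.card_union_of_disjoint hdisjws']
        have hle : QLE n ⟨(w ∪ s') ∪ {c}, D, hD⟩ ⟨w ∪ s', Ts, hTs.2.1⟩ := by
          apply mkLE hn
          · intro x hx
            rw [Finset.mem_singleton.mp hx]
            refine ⟨hcTs, ?_⟩
            rw [hTs.2.2 c hcTs, hcards]
            rw [hscard]
          · intro x hx y hy
            rw [Finset.mem_singleton.mp hx]
            exact hwlt y hy
          · exact hDT'.trans hT'Ts
          · exact alCong hTs hAlD (hDT'.trans hT'Ts)
        have hmem := hHit Ts hTs.2.1 hTs hTsTp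
        have hres := hopen1 _ _ hle hmem
        have hfeq : (w ∪ s') ∪ {c} = w ∪ s := by rw [Finset.union_assoc, hseq]
        exact hfeq ▸ hres
      · refine Or.inl ?_
        have hcTp : c ∈ Tp := hTsTp hcTs
        have hwlt : ∀ y ∈ w ∪ s', y < c := by
          intro y hy
          rcases Finset.mem_union.mp hy with h | h
          · exact hcw y h
          · exact hs'lt y h
        have := hext c hcTp hscard hwlt
        rw [hseq] at this
        exact Acc_mono (hT'Ts.trans hTsTp) this
    · have hssub : s ⊆ cs.toFinset := by
        intro x hx
        have := hs hx
        rw [hsplit] at this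
        rcases Finset.mem_union.mp this with h | h
        · exact h
        · exact absurd (Finset.mem_singleton.mp h ▸ hx) hcs
      exact Good_mono hT'T (hstems s hssub hstem)

end Main

end PD

theorem stmt6' (n : ℕ) (hn : 0 < n)
    (I0 I1 : Set (QCond n))
    (hopen0 : ∀ p q : QCond n, QLE n p q → q ∈ I0 → p ∈ I0)
    (hopen1 : ∀ p q : QCond n, QLE n p q → q ∈ I1 → p ∈ I1)
    (hdisj : I0 ∩ I1 = ∅)
    (p : QCond n) :
    ∃ q : QCond n, q.w = p.w ∧ QLE n q p ∧
      ((∀ r : QCond n, QLE n r q → r ∉ I1) ∨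
       (∀ r : QCond n, QLE n r q → r ∉ I0)) := by
  classical
  obtain ⟨A0, hA0sub, hA0inf, hA0gt, hA0cong⟩ := PD.shrink0 p.infinite n (p.w.sup id) hn
  set w := p.w with hwdef
  have hA0w : ∀ x ∈ A0, ∀ y ∈ w, y < x := by
    intro x hx y hy
    exact lt_of_le_of_lt (Finset.le_sup (f := id) hy) (hA0gt x hx)
  have hAlA0 : PD.Al n A0 A0 := ⟨le_refl _, hA0inf, fun x _ => rfl⟩
  have baseLE : ∀ (X : Set ℕ) (hX : X.Infinite), PD.Al n A0 X →
      QLE n ⟨w, X, hX⟩ p := by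
    intro X hX hAlX
    refine ⟨le_refl _, ?_, ?_, ?_⟩
    · intro x hx hx2
      exact absurd hx hx2
    · intro i _ x hx
      exact absurd hx.1 hx.2
    · intro i _ x hx
      obtain ⟨hx1, hx2⟩ := hx
      have hxA0 : x ∈ A0 := hAlX.1 hx1
      refine ⟨hA0sub hxA0, ?_⟩
      rw [← hA0cong x hxA0, ← hAlX.2.2 x hx1]
      exact hx2
  -- a convenient record of extraction consequences
  have analyze : ∀ (X : Set ℕ) (hX : X.Infinite), PD.Al n A0 X →
      ∀ r : QCond n, QLE n r ⟨w, X, hX⟩ →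
      r.w = w ∪ (r.w \ w) ∧ (↑(r.w \ w) : Set ℕ) ⊆ X ∧
      PD.Stem n A0 w (r.w \ w) ∧ PD.Al n A0 r.A ∧ r.A ⊆ X ∧
      (∀ x ∈ (r.w \ w), ∀ y ∈ w, y < x) := by
    intro X hX hAlX r hr
    obtain ⟨heq, hab, hv, hAsub, hAcong⟩ := PD.extract hn hr
    have hvX : (↑(r.w \ w) : Set ℕ) ⊆ X := by
      intro x hx
      have hx' : x ∈ r.w \ w := by exact_mod_cast hx
      exact (hv x hx').1
    refine ⟨heq, hvX, ⟨fun x hx => hAlX.1 (hvX hx), ?_⟩, ⟨fun x hx => hAlX.1 (hAsub hx),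
      r.infinite, ?_⟩, hAsub, hab⟩
    · intro x hx
      have h1 := (hv x hx).2
      have h2 := hAlX.2.2 x (hvX (by exact_mod_cast hx))
      have h3 : setIdx (↑r.w) x = w.card + ((r.w \ w).filter (· < x)).card := by
        conv_lhs => rw [heq]
        exact PD.setIdx_union_split Finset.disjoint_sdiff (hab x hx)
      rw [← h2, h1, h3]
    · intro x hx
      rw [hAcong x hx, hAlX.2.2 x (hAsub hx)]
  by_cases hacc : PD.Acc n A0 w I1 ∅ A0
  · -- main fusion case : second disjunct
    have hbase : PD.FuseP n A0 w I1 [] A0 := by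
      refine ⟨hAlA0, by simp, ?_⟩
      intro s hs _
      rw [List.toFinset_nil, Finset.subset_empty] at hs
      rw [hs]
      exact Or.inl hacc
    obtain ⟨f, hf0, hP, hR⟩ := PD.dcChain
      (P := fun a : List ℕ × Set ℕ => PD.FuseP n A0 w I1 a.1 a.2)
      (R := fun _ a b => ∃ c, b.1 = a.1 ++ [c] ∧ b.2 ⊆ a.2 ∧ c ∈ a.2 ∧
        setIdx A0 c % n = a.1.length % n)
      (fun _ a ha => by
        obtain ⟨c, T', h1, h2, h3, h4⟩ := PD.fuseStep hn hA0w hopen1 ha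
        exact ⟨(a.1 ++ [c], T'), h1, c, rfl, h2, h3, h4⟩)
      ([], A0) hbase
    choose e he1 he2 he3 he4 using hR
    have hlen : ∀ k, (f k).1.length = k := by
      intro k
      induction k with
      | zero => simp [hf0]
      | succ k ih => simp [he1 k, List.length_append, ih]
    have hcs : ∀ k, (f k).1 = (List.range k).map e := by
      intro k
      induction k with
      | zero => simp [hf0]
      | succ k ih => simp [he1 k, ih, List.range_succ, List.map_append]
    have hTdec : ∀ k j, k ≤ j → (f j).2 ⊆ (f k).2 := by
      intro k j hkj
      induction j with
      | zero => rw [Nat.le_zero.mp hkj]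
      | succ j ih =>
          rcases Nat.lt_or_ge k (j+1) with h | h
          · exact (he2 j).trans (ih (by omega))
          · have : k = j + 1 := by omega
            rw [this]
    have hemono : StrictMono e := by
      apply strictMono_nat_of_lt_succ
      intro k
      have h1 : e k ∈ (f (k+1)).1 := by
        rw [he1 k]
        exact List.mem_append_right _ (List.mem_singleton_self _)
      exact (hP (k+1)).2.1 (e k) h1 (e (k+1)) (he3 (k+1))
    set C := Set.range e with hC
    have hCsub : ∀ k, e k ∈ (f k).2 := he3
    have hCA0 : C ⊆ A0 := by
      rintro x ⟨k, rfl⟩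
      exact ((hP k).1).1 (hCsub k)
    have hAlC : PD.Al n A0 C := by
      refine ⟨hCA0, Set.infinite_range_of_injective hemono.injective, ?_⟩
      rintro x ⟨k, rfl⟩
      rw [PD.setIdx_range hemono]
      rw [he4 k, hlen k]
    have hCtail : ∀ k x, x ∈ C → e k < x → x ∈ (f (k+1)).2 := by
      rintro k x ⟨j, rfl⟩ hlt
      have hkj : k < j := hemono.lt_iff_lt.mp hlt
      exact hTdec (k+1) j hkj (hCsub j)
    refine ⟨⟨w, C, hAlC.2.1⟩, rfl, baseLE C _ hAlC, Or.inr ?_⟩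
    intro r hr hrI0
    obtain ⟨heq, hvX, hstemv, hAlrA, hrAX, habv⟩ := analyze C hAlC.2.1 hAlC r hr
    set v := r.w \ w with hv
    -- find a stage k capturing v
    have hidx : ∀ x ∈ v, e (setIdx C x) = x := by
      intro x hx
      obtain ⟨j, rfl⟩ := hvX (by exact_mod_cast hx)
      rw [PD.setIdx_range hemono]
    set k := (v.sup fun x => setIdx C x) + 1 with hk
    have hvcs : v ⊆ (f k).1.toFinset := by
      intro x hx
      rw [hcs k]
      apply List.mem_toFinset.mpr
      apply List.mem_map.mpr
      refine ⟨setIdx C x, List.mem_range.mpr ?_, hidx x hx⟩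
      have : setIdx C x ≤ v.sup fun x => setIdx C x := Finset.le_sup hx
      omega
    have hGood := (hP k).2.2 v hvcs hstemv
    set b := max (e k) ((w ∪ v).sup id) with hb
    obtain ⟨Z', hAlZ', hZ'sub⟩ := PD.shrinkAl hn hAlrA b
    have hZ'rA : Z' ⊆ r.A := fun x hx => (hZ'sub hx).1
    have hZ'Tk : Z' ⊆ (f k).2 := by
      intro z hz
      have h1 : z ∈ C := hrAX (hZ'rA hz)
      have h2 : e k < z := lt_of_le_of_lt (le_max_left _ _) (hZ'sub hz).2
      exact (he2 k) (hCtail k z h1 h2)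
    have hZ'gt : ∀ z ∈ Z', ∀ y ∈ w ∪ v, y < z := by
      intro z hz y hy
      have h1 : y ≤ (w ∪ v).sup id := Finset.le_sup (f := id) hy
      have h2 := (hZ'sub hz).2
      have h3 : (w ∪ v).sup id ≤ b := le_max_right _ _
      omega
    have hrwuv : r.w = w ∪ v := heq
    rcases hGood with hAcc2 | hHit
    · obtain ⟨u, D, hD, hstem2, huZ, hab2, hAlD, hDZ, hmem1⟩ := hAcc2 Z' hAlZ' hZ'Tk
      have hle : QLE n ⟨r.w ∪ u, D, hD⟩ ⟨r.w, r.A, r.infinite⟩ := by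
        apply PD.mkLE hn
        · intro x hx
          have hxZ : x ∈ Z' := huZ (by exact_mod_cast hx)
          have hxA : x ∈ r.A := hZ'rA hxZ
          refine ⟨hxA, ?_⟩
          have h1 : x ∈ A0 := hAlrA.1 hxA
          have h2 : setIdx (↑(r.w ∪ u)) x = w.card + ((v ∪ u).filter (· < x)).card := by
            rw [show r.w ∪ u = w ∪ (v ∪ u) by rw [hrwuv, Finset.union_assoc]]
            apply PD.setIdx_union_split
            · rw [Finset.disjoint_left]
              intro a haw hauv
              rcases Finset.mem_union.mp hauv with h | h
              · exact absurd haw (Finset.mem_sdiff.mp h).2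
              · have ha0 : a ∈ A0 := hAlrA.1 (hZ'rA (huZ (by exact_mod_cast h)))
                exact absurd (hA0w a ha0 a haw) (lt_irrefl a)
            · exact hA0w x h1
          have h3 := hstem2.2 x (Finset.mem_union_right v (by exact_mod_cast hx))
          rw [hAlrA.2.2 x hxA, h2, ← h3]
        · intro x hx y hy
          rw [hrwuv] at hy
          exact hab2 x hx y hy
        · exact fun x hx => hZ'rA (hDZ hx)
        · intro x hx
          rw [hAlD.2.2 x hx, hAlrA.2.2 x (hZ'rA (hDZ hx))]
      have hI0 : (⟨r.w ∪ u, D, hD⟩ : QCond n) ∈ I0 := hopen0 _ _ hle hrI0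
      have hI1 : (⟨r.w ∪ u, D, hD⟩ : QCond n) ∈ I1 := by
        have hfeq : r.w ∪ u = w ∪ (v ∪ u) := by rw [hrwuv, Finset.union_assoc]
        rw [hfeq]
        exact hmem1
      exact absurd (Set.mem_inter hI0 hI1) (by rw [hdisj]; exact Set.notMem_empty _)
    · have hmem := hHit Z' hAlZ'.2.1 hAlZ' hZ'Tk
      have hle : QLE n ⟨r.w, Z', hAlZ'.2.1⟩ ⟨r.w, r.A, r.infinite⟩ :=
        PD.pureLE hn r.infinite hAlZ'.2.1 hZ'rA
          (fun x hx => by rw [hAlZ'.2.2 x hx, hAlrA.2.2 x (hZ'rA hx)])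
      have hI0 : (⟨r.w, Z', hAlZ'.2.1⟩ : QCond n) ∈ I0 := hopen0 _ _ hle hrI0
      have hI1 : (⟨r.w, Z', hAlZ'.2.1⟩ : QCond n) ∈ I1 := by
        rw [hrwuv]
        exact hmem
      exact absurd (Set.mem_inter hI0 hI1) (by rw [hdisj]; exact Set.notMem_empty _)
  · -- rejection case : first disjunct
    unfold PD.Acc at hacc
    push_neg at hacc
    obtain ⟨Y, hAlY, hYA0, hnpr⟩ := hacc
    refine ⟨⟨w, Y, hAlY.2.1⟩, rfl, baseLE Y _ hAlY, Or.inl ?_⟩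
    intro r hr hrI1
    obtain ⟨heq, hvX, hstemv, hAlrA, hrAX, habv⟩ := analyze Y hAlY.2.1 hAlY r hr
    apply hnpr
    refine ⟨r.w \ w, r.A, r.infinite, ?_, hvX, ?_, hAlrA, hrAX, ?_⟩
    · rw [Finset.empty_union]; exact hstemv
    · intro x hx y hy
      rw [Finset.union_empty] at hy
      exact habv x hx y hy
    · have hfeq : w ∪ (∅ ∪ (r.w \ w)) = r.w := by
        rw [Finset.empty_union]; exact heq.symm
      rw [hfeq]
      exact hrI1

/-- Lemma 1.15 (pure decision for `Q = Qⁿ`, combinatorial form): if `I0, I1 ⊆ Q` are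
open, disjoint, and their union is dense in `Q`, then every condition `p ∈ Q` has a
pure extension `q ≤⁰ p` no extension of which lies in one of the two sets. -/
theorem stmt6 (n : ℕ) (hn : 0 < n)
    (I0 I1 : Set (QCond n))
    (hopen0 : ∀ p q : QCond n, QLE n p q → q ∈ I0 → p ∈ I0)
    (hopen1 : ∀ p q : QCond n, QLE n p q → q ∈ I1 → p ∈ I1)
    (hdisj : I0 ∩ I1 = ∅)
    (hdense : ∀ p : QCond n, ∃ q : QCond n, QLE n q p ∧ q ∈ I0 ∪ I1)
    (p : QCond n) :
    ∃ q : QCond n, q.w = p.w ∧ QLE n q p ∧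
      ((∀ r : QCond n, QLE n r q → r ∉ I1) ∨
       (∀ r : QCond n, QLE n r q → r ∉ I0)) := by
  exact stmt6' n hn I0 I1 hopen0 hopen1 hdisj p
end
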